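/- arXiv:1604.05351 — 6 statements merged into one kernel-verified Lean document; each statement's English description precedes it below -/
import Mathlib

section
/- Let f : ℝᵏ → ℝ₊ be a log-concave integrable function with 0 in the interior of its support, and let p > 0. Then the function x ↦ (∫₀^∞ t^{p-1} f(tx) dt)^{-1/p}, defined for x ≠ 0 and extended by 0 at the origin, is the Minkowski functional (gauge) of a convex body L_p(f) in ℝᵏ containing 0 in its interior; i.e., this function is a nonnegative positively homogeneous convex function of x. -/
/-!
Since `I(x) = ∫₀^∞ t^{p-1} f(t x) dt` satisfies `I(c x) = c^{-p} I(x)`, the function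
`N = I^{-1/p}` is positively homogeneous, and its convexity reduces to Ball's inequality:
`I(x) = I(y) = 1` implies `I(a x + b y) ≥ 1` whenever `a + b = 1`. This is proved by transport.
Let `u, v` be the quantile functions of the probability densities `t^{p-1} f(t x)` and
`t^{p-1} f(t y)` on `(0, ∞)` and `T` the `(a, b)`-weighted harmonic mean of `u` and `v`. Then
`T (a x + b y)` is a convex combination of `u x` and `v y`, so log-concavity and two weighted
AM-GM inequalities give `T' · T^{p-1} f(T (a x + b y)) ≥ 1`, and a change of variables gives
`I(a x + b y) ≥ 1`. The ray densities are integrable because an integrable log-concave function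
is bounded and decays exponentially along every ray.
-/

open MeasureTheory Set Metric Filter Topology Real

theorem Convex.smul_mem_interior_of_lt {E : Type*} [NormedAddCommGroup E] [NormedSpace ℝ E]
    {S : Set E} (hS : Convex ℝ S) (h0 : (0 : E) ∈ interior S) {x : E} {s t : ℝ} (hs : 0 < s)
    (hst : s < t) (ht : t • x ∈ S) : s • x ∈ interior S := by
  have ht0 : 0 < t := hs.trans hst
  have h := hS.combo_interior_self_mem_interior h0 ht (a := 1 - s / t) (b := s / t)
    (sub_pos.2 ((div_lt_one ht0).2 hst)) (div_nonneg hs.le ht0.le) (by ring)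
  rwa [smul_zero, zero_add, smul_smul, div_mul_cancel₀ _ ht0.ne'] at h

section LogConcave

variable {E : Type*} [NormedAddCommGroup E] [NormedSpace ℝ E] {f : E → ℝ}

theorem ConcaveOn.rpow_mul_rpow_le_apply_combo
    (hlc : ConcaveOn ℝ {x | 0 < f x} fun x => log (f x))
    {a b : E} (ha : 0 < f a) (hb : 0 < f b) {θ : ℝ} (hθ₀ : 0 ≤ θ) (hθ₁ : θ ≤ 1) :
    f a ^ θ * f b ^ (1 - θ) ≤ f (θ • a + (1 - θ) • b) := by
  have hθ₁' : 0 ≤ 1 - θ := sub_nonneg.2 hθ₁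
  have hpos : 0 < f (θ • a + (1 - θ) • b) := hlc.1 ha hb hθ₀ hθ₁' (by ring)
  have hlog := hlc.2 ha hb hθ₀ hθ₁' (by ring)
  simp only [smul_eq_mul] at hlog
  rw [← exp_log hpos, rpow_def_of_pos ha, rpow_def_of_pos hb, ← exp_add]
  exact exp_le_exp.2 (by linarith)

theorem ConcaveOn.continuousOn_interior_of_log [FiniteDimensional ℝ E]
    (hlc : ConcaveOn ℝ {x | 0 < f x} fun x => log (f x)) :
    ContinuousOn f (interior {x | 0 < f x}) :=
  hlc.continuousOn_interior.rexp.congr fun _ hx =>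
    (exp_log (interior_subset (s := {x | 0 < f x}) hx)).symm

theorem exists_ball_forall_le_of_concaveOn_log [FiniteDimensional ℝ E]
    (h0 : (0 : E) ∈ interior {x | 0 < f x})
    (hlc : ConcaveOn ℝ {x | 0 < f x} fun x => log (f x)) :
    ∃ δ > 0, ∃ m > 0, ∀ w ∈ ball (0 : E) δ, m ≤ f w := by
  have hf0 : 0 < f 0 := interior_subset (s := {x | 0 < f x}) h0
  have hcont : ContinuousAt f 0 :=
    hlc.continuousOn_interior_of_log.continuousAt (isOpen_interior.mem_nhds h0)
  obtain ⟨δ, hδ, hball⟩ :=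
    Metric.eventually_nhds_iff_ball.1 (hcont.eventually (lt_mem_nhds (half_lt_self hf0)))
  exact ⟨δ, hδ, f 0 / 2, half_pos hf0, fun w hw => (hball w hw).le⟩

/-- `y` is the midpoint of `z` and a point of `ball 0 δ`, where `f ≥ m`. -/
theorem sqrt_mul_le_apply_of_mem_ball (hlc : ConcaveOn ℝ {x | 0 < f x} fun x => log (f x))
    {δ m : ℝ} (hm0 : 0 < m) (hm : ∀ w ∈ ball (0 : E) δ, m ≤ f w) {z : E} (hz : 0 < f z)
    {y : E} (hy : y ∈ ball ((1 / 2 : ℝ) • z) (δ / 2)) : √(f z * m) ≤ f y := by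
  set w : E := (2 : ℝ) • (y - (1 / 2 : ℝ) • z)
  have hw : m ≤ f w := by
    refine hm w ?_
    rw [mem_ball_iff_norm] at hy
    rw [mem_ball_zero_iff, norm_smul, Real.norm_two]
    linarith
  have hyw : y = (1 / 2 : ℝ) • z + (1 - 1 / 2 : ℝ) • w := by
    simp only [w, smul_sub, smul_smul]
    module
  calc √(f z * m) ≤ √(f z * f w) := sqrt_le_sqrt (mul_le_mul_of_nonneg_left hw hz.le)
    _ = f z ^ (1 / 2 : ℝ) * f w ^ (1 - 1 / 2 : ℝ) := by
        rw [sqrt_eq_rpow, mul_rpow hz.le (hm0.trans_le hw).le]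
        norm_num
    _ ≤ f y := hyw ▸ hlc.rpow_mul_rpow_le_apply_combo hz (hm0.trans_le hw) (by norm_num)
        (by norm_num)

end LogConcave

section Integrable

variable {E : Type*} [NormedAddCommGroup E] [NormedSpace ℝ E] [FiniteDimensional ℝ E]
  [MeasurableSpace E] [BorelSpace E] {μ : Measure E} [μ.IsAddHaarMeasure] {f : E → ℝ}

/-- A large value `f z` forces `f ≥ √(f z * m)` on a ball of fixed volume around `z / 2`. -/
theorem bddAbove_range_of_concaveOn_log (hf0 : ∀ x, 0 ≤ f x) (hfint : Integrable f μ)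
    (h0 : (0 : E) ∈ interior {x | 0 < f x})
    (hlc : ConcaveOn ℝ {x | 0 < f x} fun x => log (f x)) : BddAbove (range f) := by
  obtain ⟨δ, hδ, m, hm0, hm⟩ := exists_ball_forall_le_of_concaveOn_log h0 hlc
  set V := μ.real (ball (0 : E) (δ / 2))
  have hV : 0 < V :=
    ENNReal.toReal_pos (measure_ball_pos μ 0 (half_pos hδ)).ne' measure_ball_lt_top.ne
  refine ⟨((∫ x, f x ∂μ) / V) ^ 2 / m, ?_⟩
  rintro _ ⟨z, rfl⟩
  rcases (hf0 z).eq_or_lt with hz | hz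
  · rw [← hz]
    positivity
  have hball : √(f z * m) * V ≤ ∫ y in ball ((1 / 2 : ℝ) • z) (δ / 2), f y ∂μ := by
    rw [show V = μ.real (ball ((1 / 2 : ℝ) • z) (δ / 2)) by
      simp only [V, measureReal_def, Measure.addHaar_ball_center]]
    exact setIntegral_ge_of_const_le_real measurableSet_ball measure_ball_lt_top.ne
      (fun y hy => sqrt_mul_le_apply_of_mem_ball hlc hm0 hm hz hy) hfint.integrableOn
  have hle : √(f z * m) ≤ (∫ x, f x ∂μ) / V :=
    (le_div_iff₀ hV).2 (hball.trans (setIntegral_le_integral hfint (ae_of_all _ hf0)))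
  rw [le_div_iff₀ hm0]
  exact (sqrt_le_left ((sqrt_nonneg _).trans hle)).1 hle

/-- Along a ray, `f` cannot stay above a positive constant: the half-balls of
`sqrt_mul_le_apply_of_mem_ball` around far-apart points of the ray would carry infinite mass. -/
theorem exists_apply_smul_lt_of_concaveOn_log (hfint : Integrable f μ)
    (h0 : (0 : E) ∈ interior {x | 0 < f x})
    (hlc : ConcaveOn ℝ {x | 0 < f x} fun x => log (f x)) {x : E} (hx : x ≠ 0) (t₀ : ℝ)
    {c : ℝ} (hc : 0 < c) : ∃ t ≥ t₀, f (t • x) < c := by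
  by_contra! hge
  obtain ⟨δ, hδ, m, hm0, hm⟩ := exists_ball_forall_le_of_concaveOn_log h0 hlc
  have hx' : 0 < ‖x‖ := norm_pos_iff.2 hx
  set κ := 2 * δ / ‖x‖
  set B : ℕ → Set E := fun n => ball ((1 / 2 : ℝ) • ((t₀ + n * κ) • x)) (δ / 2)
  have hdisj : Pairwise (Function.onFun Disjoint B) := by
    refine (pairwise_disjoint_on B).2 fun i j hij => ball_disjoint_ball ?_
    have hij' : (i : ℝ) + 1 ≤ j := by exact_mod_cast hij
    rw [dist_comm, dist_eq_norm, smul_smul, smul_smul, ← sub_smul, norm_smul, Real.norm_eq_abs,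
      abs_of_nonneg (by nlinarith [show 0 ≤ κ by positivity])]
    calc δ / 2 + δ / 2 ≤ (j - i) * δ := by nlinarith
      _ = (1 / 2 * (t₀ + j * κ) - 1 / 2 * (t₀ + i * κ)) * ‖x‖ := by
        simp only [κ]
        field_simp
        ring
  have hsub : (⋃ n, B n) ⊆ {y | √(c * m) ≤ ‖f y‖} := by
    refine iUnion_subset fun n y hy => ?_
    have hn := hge (t₀ + n * κ) (le_add_of_nonneg_right (by positivity))
    calc √(c * m) ≤ √(f ((t₀ + n * κ) • x) * m) := sqrt_le_sqrt (by gcongr)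
      _ ≤ f y := sqrt_mul_le_apply_of_mem_ball hlc hm0 hm (hc.trans_le hn) hy
      _ ≤ ‖f y‖ := le_norm_self _
  have htop : μ (⋃ n, B n) = ⊤ := by
    rw [measure_iUnion hdisj fun _ => measurableSet_ball]
    simp only [B, Measure.addHaar_ball_center]
    exact ENNReal.tsum_const_eq_top_of_ne_zero (measure_ball_pos μ 0 (half_pos hδ)).ne'
  have hfin := hfint.measure_norm_ge_lt_top (sqrt_pos.2 (mul_pos hc hm0))
  exact (measure_mono hsub).trans_lt hfin |>.ne htop

end Integrable

structure IsIntervalDensity (g : ℝ → ℝ) (U : Set ℝ) : Prop where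
  isOpen : IsOpen U
  ordConnected : U.OrdConnected
  subset_Ioi : U ⊆ Ioi 0
  nonempty : U.Nonempty
  continuousOn : ContinuousOn g U
  pos : ∀ t ∈ U, 0 < g t
  ae_eq_zero : ∀ᵐ t, 0 < t → t ∉ U → g t = 0
  integrableOn : IntegrableOn g (Ioi 0)

namespace IsIntervalDensity

variable {g : ℝ → ℝ} {U : Set ℝ}

theorem ae_nonneg (hg : IsIntervalDensity g U) : ∀ᵐ t, 0 < t → 0 ≤ g t := by
  filter_upwards [hg.ae_eq_zero] with t ht ht0
  by_cases htU : t ∈ U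
  · exact (hg.pos t htU).le
  · exact (ht ht0 htU).ge

theorem intervalIntegrable (hg : IsIntervalDensity g U) {a b : ℝ} (ha : 0 ≤ a) (hb : 0 ≤ b) :
    IntervalIntegrable g volume a b :=
  ⟨hg.integrableOn.mono_set fun _ ht => ha.trans_lt ht.1,
    hg.integrableOn.mono_set fun _ ht => hb.trans_lt ht.1⟩

theorem setIntegral_eq_zero (hg : IsIntervalDensity g U) {A : Set ℝ} (hA : A ⊆ Ioi 0)
    (hAU : Disjoint A U) : ∫ t in A, g t = 0 :=
  setIntegral_eq_zero_of_ae_eq_zero <| hg.ae_eq_zero.mono fun _ h ht =>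
    h (hA ht) (hAU.notMem_of_mem_left ht)

theorem strictMonoOn_primitive (hg : IsIntervalDensity g U) :
    StrictMonoOn (fun t => ∫ s in 0..t, g s) U := by
  intro s hs t ht hst
  have hs0 : 0 ≤ s := (hg.subset_Ioi hs).le
  have ht0 : 0 ≤ t := (hg.subset_Ioi ht).le
  have hpos : 0 < ∫ r in s..t, g r :=
    intervalIntegral.intervalIntegral_pos_of_pos_on (hg.intervalIntegrable hs0 ht0)
    (fun r hr => hg.pos r (hg.ordConnected.out hs ht (Ioo_subset_Icc_self hr))) hst
  have hsub := intervalIntegral.integral_interval_sub_left (hg.intervalIntegrable le_rfl ht0)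
    (hg.intervalIntegrable le_rfl hs0)
  simp only
  linarith

theorem primitive_nonneg (hg : IsIntervalDensity g U) {t : ℝ} (ht : 0 ≤ t) :
    0 ≤ ∫ s in 0..t, g s := by
  rw [intervalIntegral.integral_of_le ht]
  exact setIntegral_nonneg_ae measurableSet_Ioc (hg.ae_nonneg.mono fun _ h hs => h hs.1)

theorem primitive_add_integral_Ioi (hg : IsIntervalDensity g U) {t : ℝ} (ht : 0 ≤ t) :
    (∫ s in 0..t, g s) + ∫ s in Ioi t, g s = ∫ s in Ioi 0, g s :=
  intervalIntegral.integral_interval_add_Ioi hg.integrableOn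
    (hg.integrableOn.mono_set (Ioi_subset_Ioi ht))

theorem primitive_mem_Ioo (hg : IsIntervalDensity g U) {t : ℝ} (ht : t ∈ U) :
    ∫ s in 0..t, g s ∈ Ioo 0 (∫ s in Ioi 0, g s) := by
  obtain ⟨l, r, ⟨hl, hr⟩, hlr⟩ := mem_nhds_iff_exists_Ioo_subset.1 (hg.isOpen.mem_nhds ht)
  have hs : (l + t) / 2 ∈ U := hlr ⟨by linarith, by linarith⟩
  have hs' : (t + r) / 2 ∈ U := hlr ⟨by linarith, by linarith⟩
  have hs'0 : 0 ≤ (t + r) / 2 := (hg.subset_Ioi hs').le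
  have hleft := hg.strictMonoOn_primitive hs ht (by linarith)
  have hright := hg.strictMonoOn_primitive ht hs' (by linarith)
  have htail : 0 ≤ ∫ s in Ioi ((t + r) / 2), g s :=
    setIntegral_nonneg_ae measurableSet_Ioi (hg.ae_nonneg.mono fun _ h hs => h (hs'0.trans_lt hs))
  have hhead := hg.primitive_nonneg (hg.subset_Ioi hs).le
  have hsplit := hg.primitive_add_integral_Ioi hs'0
  simp only at hleft hright
  constructor <;> linarith

theorem exists_primitive_eq (hg : IsIntervalDensity g U) {y : ℝ}
    (hy : y ∈ Ioo 0 (∫ s in Ioi 0, g s)) : ∃ t ∈ U, ∫ s in 0..t, g s = y := by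
  obtain ⟨b, hyb, hb⟩ : ∃ b, y < ∫ s in 0..b, g s ∧ 0 ≤ b :=
    (((intervalIntegral_tendsto_integral_Ioi 0 hg.integrableOn tendsto_id).eventually
      (lt_mem_nhds hy.2)).and (eventually_ge_atTop 0)).exists
  have hcont : ContinuousOn (fun t => ∫ s in 0..t, g s) (Icc 0 b) := by
    simpa only [uIcc_of_le hb] using intervalIntegral.continuousOn_primitive_interval'
      (hg.intervalIntegrable le_rfl hb) left_mem_uIcc
  obtain ⟨t, ⟨ht0, -⟩, hty⟩ := intermediate_value_Icc hb hcont
    ⟨by simpa using hy.1.le, hyb.le⟩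
  simp only at hty
  refine ⟨t, ?_, hty⟩
  obtain ⟨s, hs, hst⟩ : ∃ s ∈ U, s ≤ t := by
    by_contra! h
    have hhead : ∫ s in 0..t, g s = 0 := by
      rw [intervalIntegral.integral_of_le ht0]
      exact hg.setIntegral_eq_zero (fun r hr => hr.1)
        (disjoint_left.2 fun r hr hrU => (h r hrU).not_ge hr.2)
    linarith [hy.1]
  obtain ⟨s', hs', hts'⟩ : ∃ s ∈ U, t ≤ s := by
    by_contra! h
    have htail := hg.setIntegral_eq_zero (A := Ioi t) (fun r hr => ht0.trans_lt hr)
      (disjoint_left.2 fun r hr hrU => (h r hrU).not_gt hr)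
    have hsplit := hg.primitive_add_integral_Ioi ht0
    linarith [hy.2]
  exact hg.ordConnected.out hs hs' ⟨hst, hts'⟩

theorem hasDerivAt_primitive (hg : IsIntervalDensity g U) {t : ℝ} (ht : t ∈ U) :
    HasDerivAt (fun t => ∫ s in 0..t, g s) (g t) t :=
  intervalIntegral.integral_hasDerivAt_right (hg.intervalIntegrable le_rfl (hg.subset_Ioi ht).le)
    (hg.continuousOn.stronglyMeasurableAtFilter hg.isOpen t ht)
    (hg.continuousOn.continuousAt (hg.isOpen.mem_nhds ht))

theorem integral_pos (hg : IsIntervalDensity g U) : 0 < ∫ t in Ioi 0, g t := by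
  obtain ⟨t, ht⟩ := hg.nonempty
  exact (hg.primitive_mem_Ioo ht).1.trans (hg.primitive_mem_Ioo ht).2

/-- `u` is the quantile function of `g`: `∫ s in 0..u τ, g s = τ * ∫ s in Ioi 0, g s`. -/
theorem exists_quantile (hg : IsIntervalDensity g U) :
    ∃ u : ℝ → ℝ, ∀ τ ∈ Ioo 0 1,
      u τ ∈ U ∧ HasDerivAt u ((∫ t in Ioi 0, g t) / g (u τ)) τ := by
  set P := ∫ t in Ioi 0, g t
  have hP : 0 < P := hg.integral_pos
  have hex : ∀ τ, ∃ t, τ ∈ Ioo 0 1 → t ∈ U ∧ ∫ s in 0..t, g s = τ * P := by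
    intro τ
    by_cases hτ : τ ∈ Ioo (0 : ℝ) 1
    · obtain ⟨t, htU, ht⟩ :=
        hg.exists_primitive_eq (y := τ * P) ⟨mul_pos hτ.1 hP, by nlinarith [hτ.2]⟩
      exact ⟨t, fun _ => ⟨htU, ht⟩⟩
    · exact ⟨0, fun h => absurd h hτ⟩
  choose u hu using hex
  have hmono : StrictMonoOn u (Ioo 0 1) := by
    intro τ₁ h₁ τ₂ h₂ h12
    rw [← hg.strictMonoOn_primitive.lt_iff_lt (hu τ₁ h₁).1 (hu τ₂ h₂).1]
    simp only [(hu τ₁ h₁).2, (hu τ₂ h₂).2]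
    exact mul_lt_mul_of_pos_right h12 hP
  have himage : U ⊆ u '' Ioo 0 1 := by
    intro t ht
    have hmem := hg.primitive_mem_Ioo ht
    have hτ : (∫ s in 0..t, g s) / P ∈ Ioo 0 1 :=
      ⟨div_pos hmem.1 hP, (div_lt_one hP).2 hmem.2⟩
    refine ⟨_, hτ, hg.strictMonoOn_primitive.injOn (hu _ hτ).1 ht ?_⟩
    simp only [(hu _ hτ).2, div_mul_cancel₀ _ hP.ne']
  refine ⟨u, fun τ hτ => ?_⟩
  have huU := (hu τ hτ).1
  have hcont : ContinuousAt u τ := hmono.continuousAt_of_image_mem_nhds (Ioo_mem_nhds hτ.1 hτ.2)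
    (mem_of_superset (hg.isOpen.mem_nhds huU) himage)
  have hinv := ((hg.hasDerivAt_primitive huU).div_const P).of_local_left_inverse hcont
    (div_ne_zero (hg.pos _ huU).ne' hP.ne') ?_
  · rw [inv_div] at hinv
    exact ⟨huU, hinv⟩
  · filter_upwards [Ioo_mem_nhds hτ.1 hτ.2] with σ hσ
    rw [(hu σ hσ).2, mul_div_cancel_right₀ _ hP.ne']

end IsIntervalDensity

theorem le_setIntegral_Ioi_of_hasDerivAt {T T' w : ℝ → ℝ} {c : ℝ}
    (hT : ∀ τ ∈ Ioo 0 1, HasDerivAt T (T' τ) τ) (hT' : ∀ τ ∈ Ioo 0 1, 0 < T' τ)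
    (hT0 : MapsTo T (Ioo 0 1) (Ioi 0)) (hw : IntegrableOn w (Ioi 0))
    (hw0 : ∀ t ∈ Ioi 0, 0 ≤ w t) (hc : ∀ τ ∈ Ioo 0 1, c ≤ T' τ * w (T τ)) :
    c ≤ ∫ t in Ioi 0, w t := by
  have hTw : ∀ τ ∈ Ioo (0 : ℝ) 1, HasDerivWithinAt T (T' τ) (Ioo 0 1) τ :=
    fun τ hτ => (hT τ hτ).hasDerivWithinAt
  have hinj : InjOn T (Ioo 0 1) := by
    refine (strictMonoOn_of_hasDerivWithinAt_pos (f' := T') (convex_Ioo 0 1)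
      (fun τ hτ => (hT τ hτ).continuousAt.continuousWithinAt) ?_ ?_).injOn
    · simpa only [interior_Ioo] using hTw
    · simpa only [interior_Ioo] using hT'
  have hint : IntegrableOn (fun τ => |T' τ| • w (T τ)) (Ioo 0 1) :=
    (integrableOn_image_iff_integrableOn_abs_deriv_smul measurableSet_Ioo hTw hinj w).1
      (hw.mono_set hT0.image_subset)
  calc c = c * volume.real (Ioo (0 : ℝ) 1) := by simp
    _ ≤ ∫ τ in Ioo 0 1, |T' τ| • w (T τ) := by
      refine setIntegral_ge_of_const_le_real measurableSet_Ioo (by simp) (fun τ hτ => ?_) hint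
      rw [smul_eq_mul, abs_of_pos (hT' τ hτ)]
      exact hc τ hτ
    _ = ∫ t in T '' Ioo 0 1, w t :=
      (integral_image_eq_integral_abs_deriv_smul measurableSet_Ioo hTw hinj w).symm
    _ ≤ ∫ t in Ioi 0, w t :=
      setIntegral_mono_set hw (ae_restrict_of_forall_mem measurableSet_Ioi hw0)
        hT0.image_subset.eventuallyLE

/-- Two weighted AM-GM inequalities: for the inverses of `u ^ p * α` and `v ^ p * β`, and for
`u` and `v`. -/
theorem one_le_mean_inv_mul_mean_rpow_mul_geom_mean {p θ u v α β : ℝ} (hp : 0 < p)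
    (hθ₀ : 0 < θ) (hθ₁ : θ < 1) (hu : 0 < u) (hv : 0 < v) (hα : 0 < α) (hβ : 0 < β) :
    1 ≤ (θ / (u ^ p * α) + (1 - θ) / (v ^ p * β)) * (θ * u + (1 - θ) * v) ^ p *
      (α ^ θ * β ^ (1 - θ)) := by
  have hθ₁' : 0 < 1 - θ := sub_pos.2 hθ₁
  set t := θ * u + (1 - θ) * v
  set G := u ^ θ * v ^ (1 - θ)
  have hG : 0 < G := by positivity
  have hGt : G ≤ t :=
    geom_mean_le_arith_mean2_weighted hθ₀.le hθ₁'.le hu.le hv.le (by ring)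
  have hamgm : (u ^ p * α)⁻¹ ^ θ * (v ^ p * β)⁻¹ ^ (1 - θ) ≤
      θ / (u ^ p * α) + (1 - θ) / (v ^ p * β) := by
    simpa only [div_eq_mul_inv] using geom_mean_le_arith_mean2_weighted hθ₀.le hθ₁'.le
      (inv_nonneg.2 (by positivity : 0 ≤ u ^ p * α))
      (inv_nonneg.2 (by positivity : 0 ≤ v ^ p * β))
      (by ring)
  have hid :
      (u ^ p * α)⁻¹ ^ θ * (v ^ p * β)⁻¹ ^ (1 - θ) * (α ^ θ * β ^ (1 - θ)) = (G ^ p)⁻¹ := by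
    rw [inv_rpow (by positivity), inv_rpow (by positivity), mul_rpow (by positivity) hα.le,
      mul_rpow (by positivity) hβ.le, mul_rpow (by positivity) (by positivity), ← rpow_mul hu.le,
      ← rpow_mul hv.le, ← rpow_mul hu.le, ← rpow_mul hv.le, mul_comm p θ,
      mul_comm p (1 - θ)]
    field_simp
  calc 1 ≤ t ^ p / G ^ p := (one_le_div (by positivity)).2 (rpow_le_rpow hG.le hGt hp.le)
    _ = (u ^ p * α)⁻¹ ^ θ * (v ^ p * β)⁻¹ ^ (1 - θ) * t ^ p * (α ^ θ * β ^ (1 - θ)) := by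
      rw [mul_right_comm _ (t ^ p), hid, div_eq_inv_mul]
    _ ≤ _ := by gcongr

theorem aestronglyMeasurable_of_continuousOn_of_ae_eq_zero {g : ℝ → ℝ} {U s : Set ℝ}
    (hU : IsOpen U) (hs : MeasurableSet s) (hg : ContinuousOn g U)
    (h : ∀ᵐ t, t ∈ s → t ∉ U → g t = 0) :
    AEStronglyMeasurable g (volume.restrict s) := by
  have hind : AEStronglyMeasurable (U.indicator g) volume :=
    (aestronglyMeasurable_indicator_iff hU.measurableSet).2
      (hg.aestronglyMeasurable hU.measurableSet)
  refine hind.restrict.congr ?_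
  filter_upwards [(ae_restrict_iff' hs).2 h] with t ht
  by_cases htU : t ∈ U
  · rw [indicator_of_mem htU]
  · rw [indicator_of_notMem htU, ht htU]

section Ray

variable {E : Type*} [NormedAddCommGroup E] [NormedSpace ℝ E] {f : E → ℝ}

noncomputable def rayIntegral (f : E → ℝ) (p : ℝ) (x : E) : ℝ :=
  ∫ t in Ioi 0, t ^ (p - 1) * f (t • x)

def rayInterior (f : E → ℝ) (x : E) : Set ℝ :=
  Ioi 0 ∩ (· • x) ⁻¹' interior {y | 0 < f y}

theorem rayIntegral_nonneg (hf0 : ∀ x, 0 ≤ f x) (p : ℝ) (x : E) : 0 ≤ rayIntegral f p x :=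
  setIntegral_nonneg measurableSet_Ioi fun _ ht =>
    mul_nonneg (rpow_nonneg (le_of_lt ht) _) (hf0 _)

theorem rayIntegral_smul (f : E → ℝ) (p : ℝ) {c : ℝ} (hc : 0 < c) (x : E) :
    rayIntegral f p (c • x) = c ^ (-p) * rayIntegral f p x := by
  have h : ∀ t ∈ Ioi (0 : ℝ), t ^ (p - 1) * f (t • c • x) =
      c ^ (1 - p) * ((c * t) ^ (p - 1) * f ((c * t) • x)) := by
    intro t ht
    rw [smul_smul, mul_comm t c, mul_rpow hc.le (le_of_lt ht), ← mul_assoc, ← mul_assoc,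
      ← rpow_add hc]
    simp
  rw [rayIntegral, setIntegral_congr_fun measurableSet_Ioi h, integral_const_mul,
    integral_comp_mul_left_Ioi (fun t => t ^ (p - 1) * f (t • x)) 0 hc, mul_zero, smul_eq_mul,
    ← mul_assoc, ← rpow_neg_one, ← rpow_add hc, rayIntegral]
  ring_nf

theorem ConcaveOn.log_apply_smul (hlc : ConcaveOn ℝ {x | 0 < f x} fun x => log (f x)) (x : E) :
    ConcaveOn ℝ {t : ℝ | 0 < f (t • x)} fun t => log (f (t • x)) :=
  hlc.comp_linearMap (LinearMap.toSpanSingleton ℝ E x)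

theorem isOpen_rayInterior (x : E) : IsOpen (rayInterior f x) :=
  isOpen_Ioi.inter (isOpen_interior.preimage (continuous_id.smul continuous_const))

theorem ordConnected_rayInterior (hS : Convex ℝ {x | 0 < f x}) (x : E) :
    (rayInterior f x).OrdConnected :=
  ((convex_Ioi 0).inter
    (hS.interior.linear_preimage (LinearMap.toSpanSingleton ℝ E x))).ordConnected

theorem nonempty_rayInterior (h0 : (0 : E) ∈ interior {x | 0 < f x}) (x : E) :
    (rayInterior f x).Nonempty := by
  have hlim : Tendsto (fun t : ℝ => t • x) (𝓝[>] 0) (𝓝 0) := by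
    simpa using tendsto_nhdsWithin_of_tendsto_nhds
      ((continuous_id.smul continuous_const).tendsto (0 : ℝ) (f := fun t : ℝ => t • x))
  obtain ⟨t, ht, ht0⟩ :=
    ((hlim.eventually (isOpen_interior.mem_nhds h0)).and self_mem_nhdsWithin).exists
  exact ⟨t, ht0, ht⟩

theorem continuousOn_rayIntegrand [FiniteDimensional ℝ E]
    (hlc : ConcaveOn ℝ {x | 0 < f x} fun x => log (f x)) (p : ℝ) (x : E) :
    ContinuousOn (fun t => t ^ (p - 1) * f (t • x)) (rayInterior f x) :=
  (continuousOn_id.rpow_const fun _ ht => Or.inl ht.1.ne').mul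
    (hlc.continuousOn_interior_of_log.comp (continuous_id.smul continuous_const).continuousOn
      fun _ ht => ht.2)

/-- A ray from an interior point of a convex set meets its boundary at most once. -/
theorem ae_rayIntegrand_eq_zero (hf0 : ∀ x, 0 ≤ f x) (h0 : (0 : E) ∈ interior {x | 0 < f x})
    (hS : Convex ℝ {x | 0 < f x}) (p : ℝ) (x : E) :
    ∀ᵐ t, 0 < t → t ∉ rayInterior f x → t ^ (p - 1) * f (t • x) = 0 := by
  set B := {t : ℝ | 0 < t ∧ t ∉ rayInterior f x ∧ 0 < f (t • x)}
  have hB : ∀ s ∈ B, ∀ t ∈ B, ¬ s < t := fun s hs t ht hst =>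
    hs.2.1 ⟨hs.1, hS.smul_mem_interior_of_lt h0 hs.1 hst ht.2.2⟩
  have hsub : B.Subsingleton := fun s hs t ht =>
    le_antisymm (not_lt.1 (hB t ht s hs)) (not_lt.1 (hB s hs t ht))
  filter_upwards [measure_eq_zero_iff_ae_notMem.1 (hsub.measure_zero volume)] with t ht ht0 htU
  rw [le_antisymm (not_lt.1 fun hpos => ht ⟨ht0, htU, hpos⟩) (hf0 _), mul_zero]

section Integrable

variable [FiniteDimensional ℝ E] [MeasurableSpace E] [BorelSpace E] {μ : Measure E}
  [μ.IsAddHaarMeasure]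

theorem exists_apply_smul_le_exp_of_ge (hfint : Integrable f μ)
    (h0 : (0 : E) ∈ interior {x | 0 < f x})
    (hlc : ConcaveOn ℝ {x | 0 < f x} fun x => log (f x)) {x : E} (hx : x ≠ 0) {C : ℝ}
    (hC : ∀ z, f z ≤ C) :
    ∃ t₂ σ, 0 < σ ∧ ∀ t ≥ t₂, f (t • x) ≤ C * exp (-σ * (t - t₂)) := by
  obtain ⟨b, -, hb⟩ := nonempty_rayInterior h0 x
  have hbS : 0 < f (b • x) := interior_subset (s := {x | 0 < f x}) hb
  have hC0 : 0 < C := hbS.trans_le (hC _)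
  obtain ⟨t₂, hbt₂, ht₂⟩ := exists_apply_smul_lt_of_concaveOn_log hfint h0 hlc hx b hbS
  have hbt₂' : b < t₂ := hbt₂.lt_of_ne (by rintro rfl; exact lt_irrefl _ ht₂)
  by_cases h₂ : 0 < f (t₂ • x)
  · set σ := (log (f (b • x)) - log (f (t₂ • x))) / (t₂ - b)
    refine ⟨t₂, σ, div_pos (sub_pos.2 (log_lt_log h₂ ht₂)) (sub_pos.2 hbt₂'),
      fun t ht => ?_⟩
    rcases ht.eq_or_lt with rfl | ht
    · simpa using hC (t₂ • x)
    by_cases ht0 : 0 < f (t • x)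
    · have hslope := (hlc.log_apply_smul x).slope_anti_adjacent hbS ht0 hbt₂' ht
      rw [show (log (f (t₂ • x)) - log (f (b • x))) / (t₂ - b) = -σ by
          simp only [σ]; ring,
        div_le_iff₀ (sub_pos.2 ht)] at hslope
      have hlogC := log_le_log h₂ (hC (t₂ • x))
      calc f (t • x) = exp (log (f (t • x))) := (exp_log ht0).symm
        _ ≤ exp (log C + -σ * (t - t₂)) := exp_le_exp.2 (by linarith)
        _ = C * exp (-σ * (t - t₂)) := by rw [exp_add, exp_log hC0]
    · exact (not_lt.1 ht0).trans (by positivity)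
  · refine ⟨t₂, 1, one_pos, fun t ht => (not_lt.1 fun ht0 => h₂ ?_).trans (by positivity)⟩
    exact (hlc.log_apply_smul x).1.ordConnected.out hbS ht0 ⟨hbt₂, ht⟩

theorem exists_apply_smul_le_exp (hf0 : ∀ x, 0 ≤ f x) (hfint : Integrable f μ)
    (h0 : (0 : E) ∈ interior {x | 0 < f x})
    (hlc : ConcaveOn ℝ {x | 0 < f x} fun x => log (f x)) {x : E} (hx : x ≠ 0) :
    ∃ C σ, 0 < σ ∧ ∀ t, f (t • x) ≤ C * exp (-σ * t) := by
  obtain ⟨C, hC⟩ := bddAbove_range_of_concaveOn_log hf0 hfint h0 hlc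
  have hC' : ∀ z, f z ≤ C := fun z => hC (mem_range_self z)
  obtain ⟨t₂, σ, hσ, hdecay⟩ := exists_apply_smul_le_exp_of_ge hfint h0 hlc hx hC'
  refine ⟨C * exp (σ * t₂), σ, hσ, fun t => ?_⟩
  rw [mul_assoc, ← exp_add]
  rcases le_total t t₂ with h | h
  · exact (hC' _).trans
      (le_mul_of_one_le_right ((hf0 0).trans (hC' 0)) (one_le_exp (by nlinarith)))
  · convert hdecay t h using 3
    ring

theorem integrableOn_rayIntegrand (hf0 : ∀ x, 0 ≤ f x) (hfint : Integrable f μ)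
    (h0 : (0 : E) ∈ interior {x | 0 < f x})
    (hlc : ConcaveOn ℝ {x | 0 < f x} fun x => log (f x)) {p : ℝ} (hp : 0 < p) {x : E}
    (hx : x ≠ 0) : IntegrableOn (fun t => t ^ (p - 1) * f (t • x)) (Ioi 0) := by
  obtain ⟨C, σ, hσ, hCσ⟩ := exists_apply_smul_le_exp hf0 hfint h0 hlc hx
  have hmeas := aestronglyMeasurable_of_continuousOn_of_ae_eq_zero (isOpen_rayInterior x)
    measurableSet_Ioi (continuousOn_rayIntegrand hlc p x) (ae_rayIntegrand_eq_zero hf0 h0 hlc.1 p x)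
  refine ((integrableOn_rpow_mul_exp_neg_mul_rpow (by linarith : -1 < p - 1) one_pos hσ).const_mul
    C).mono' hmeas ?_
  filter_upwards [ae_restrict_mem measurableSet_Ioi] with t ht
  rw [norm_of_nonneg (mul_nonneg (rpow_nonneg (le_of_lt ht) _) (hf0 _)), rpow_one, mul_left_comm]
  exact mul_le_mul_of_nonneg_left (hCσ t) (rpow_nonneg (le_of_lt ht) _)

theorem isIntervalDensity_rayIntegrand (hf0 : ∀ x, 0 ≤ f x) (hfint : Integrable f μ)
    (h0 : (0 : E) ∈ interior {x | 0 < f x})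
    (hlc : ConcaveOn ℝ {x | 0 < f x} fun x => log (f x)) {p : ℝ} (hp : 0 < p) {x : E}
    (hx : x ≠ 0) : IsIntervalDensity (fun t => t ^ (p - 1) * f (t • x)) (rayInterior f x) where
  isOpen := isOpen_rayInterior x
  ordConnected := ordConnected_rayInterior hlc.1 x
  subset_Ioi := inter_subset_left
  nonempty := nonempty_rayInterior h0 x
  continuousOn := continuousOn_rayIntegrand hlc p x
  pos _ ht := mul_pos (rpow_pos_of_pos ht.1 _) (interior_subset (s := {x | 0 < f x}) ht.2)
  ae_eq_zero := ae_rayIntegrand_eq_zero hf0 h0 hlc.1 p x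
  integrableOn := integrableOn_rayIntegrand hf0 hfint h0 hlc hp hx

end Integrable

end Ray

section Ball

variable {E : Type*} [NormedAddCommGroup E] [NormedSpace ℝ E] {f : E → ℝ}

/-- `T` is the `(a, b)`-weighted harmonic mean of `u` and `v`, so that `T • (a • x + b • y)`
is a convex combination of `u • x` and `v • y`. -/
theorem one_le_transport_rayIntegrand (hlc : ConcaveOn ℝ {x | 0 < f x} fun x => log (f x))
    {p : ℝ} (hp : 0 < p) {x y : E} {a b u v T : ℝ} (ha : 0 < a) (hb : 0 < b) (hab : a + b = 1)
    (hu : 0 < u) (hv : 0 < v) (hux : 0 < f (u • x)) (hvy : 0 < f (v • y))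
    (hT : T = (a * u⁻¹ + b * v⁻¹)⁻¹) :
    1 ≤ T ^ 2 * (a * (u ^ (p - 1) * f (u • x))⁻¹ / u ^ 2 +
      b * (v ^ (p - 1) * f (v • y))⁻¹ / v ^ 2) * (T ^ (p - 1) * f (T • (a • x + b • y))) := by
  have hT0 : 0 < T := by rw [hT]; positivity
  set θ := a * T / u
  have hθ : 1 - θ = b * T / v := by
    simp only [θ, hT]
    field_simp
    ring
  have hθ₀ : 0 < θ := by positivity
  have hθ₁ : θ < 1 := by linarith [show 0 < b * T / v by positivity]
  have hTθ : T = θ * u + (1 - θ) * v := by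
    rw [show θ * u = a * T by simp only [θ]; field_simp, hθ,
      show b * T / v * v = b * T by field_simp]
    linear_combination -T * hab
  have hcomb : T • (a • x + b • y) = θ • (u • x) + (1 - θ) • (v • y) := by
    rw [hθ]
    simp only [θ, smul_add, smul_smul]
    congr 2 <;> field_simp
  have hf := hlc.rpow_mul_rpow_le_apply_combo hux hvy hθ₀.le hθ₁.le
  rw [← hcomb] at hf
  have hjac : T ^ 2 * (a * (u ^ (p - 1) * f (u • x))⁻¹ / u ^ 2 +
      b * (v ^ (p - 1) * f (v • y))⁻¹ / v ^ 2) * T ^ (p - 1) =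
      (θ / (u ^ p * f (u • x)) + (1 - θ) / (v ^ p * f (v • y))) * T ^ p := by
    rw [hθ, rpow_sub_one hu.ne', rpow_sub_one hv.ne', rpow_sub_one hT0.ne']
    simp only [θ]
    field_simp
  calc 1 ≤ (θ / (u ^ p * f (u • x)) + (1 - θ) / (v ^ p * f (v • y))) *
        (θ * u + (1 - θ) * v) ^ p * (f (u • x) ^ θ * f (v • y) ^ (1 - θ)) :=
        one_le_mean_inv_mul_mean_rpow_mul_geom_mean hp hθ₀ hθ₁ hu hv hux hvy
    _ = T ^ 2 * (a * (u ^ (p - 1) * f (u • x))⁻¹ / u ^ 2 +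
        b * (v ^ (p - 1) * f (v • y))⁻¹ / v ^ 2) * T ^ (p - 1) *
        (f (u • x) ^ θ * f (v • y) ^ (1 - θ)) := by rw [← hTθ, hjac]
    _ ≤ _ := by
      rw [mul_assoc]
      gcongr

variable [FiniteDimensional ℝ E] [MeasurableSpace E] [BorelSpace E] {μ : Measure E}
  [μ.IsAddHaarMeasure]

theorem one_le_rayIntegral_combo (hf0 : ∀ x, 0 ≤ f x) (hfint : Integrable f μ)
    (h0 : (0 : E) ∈ interior {x | 0 < f x})
    (hlc : ConcaveOn ℝ {x | 0 < f x} fun x => log (f x)) {p : ℝ} (hp : 0 < p) {x y : E}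
    (hx : x ≠ 0) (hy : y ≠ 0) (hIx : rayIntegral f p x = 1) (hIy : rayIntegral f p y = 1)
    {a b : ℝ} (ha : 0 < a) (hb : 0 < b) (hab : a + b = 1) (hz : a • x + b • y ≠ 0) :
    1 ≤ rayIntegral f p (a • x + b • y) := by
  obtain ⟨u, hu⟩ := (isIntervalDensity_rayIntegrand hf0 hfint h0 hlc hp hx).exists_quantile
  obtain ⟨v, hv⟩ := (isIntervalDensity_rayIntegrand hf0 hfint h0 hlc hp hy).exists_quantile
  rw [rayIntegral] at hIx hIy
  simp only [hIx, hIy] at hu hv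
  have hpos : ∀ τ ∈ Ioo (0 : ℝ) 1,
      0 < u τ ∧ 0 < v τ ∧ 0 < f (u τ • x) ∧ 0 < f (v τ • y) := fun τ hτ =>
    ⟨(hu τ hτ).1.1, (hv τ hτ).1.1, interior_subset (s := {x | 0 < f x}) (hu τ hτ).1.2,
      interior_subset (s := {x | 0 < f x}) (hv τ hτ).1.2⟩
  set T : ℝ → ℝ := fun τ => (a * (u τ)⁻¹ + b * (v τ)⁻¹)⁻¹
  rw [rayIntegral]
  refine le_setIntegral_Ioi_of_hasDerivAt (T := T)
    (T' := fun τ => T τ ^ 2 * (a * (u τ ^ (p - 1) * f (u τ • x))⁻¹ / u τ ^ 2 +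
      b * (v τ ^ (p - 1) * f (v τ • y))⁻¹ / v τ ^ 2)) (fun τ hτ => ?_) (fun τ hτ => ?_)
    (fun τ hτ => ?_) (integrableOn_rayIntegrand hf0 hfint h0 hlc hp hz)
    (fun t ht => mul_nonneg (rpow_nonneg (le_of_lt ht) _) (hf0 _)) (fun τ hτ => ?_)
  · obtain ⟨hu0, hv0, -, -⟩ := hpos τ hτ
    refine ((((hu τ hτ).2.fun_inv hu0.ne').const_mul a).fun_add
      (((hv τ hτ).2.fun_inv hv0.ne').const_mul b)).fun_inv (by positivity) |>.congr_deriv ?_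
    simp only [T]
    field_simp
    ring
  · obtain ⟨hu0, hv0, hux, hvy⟩ := hpos τ hτ
    positivity
  · obtain ⟨hu0, hv0, -, -⟩ := hpos τ hτ
    exact (show 0 < T τ by positivity)
  · obtain ⟨hu0, hv0, hux, hvy⟩ := hpos τ hτ
    exact one_le_transport_rayIntegrand hlc hp ha hb hab hu0 hv0 hux hvy rfl

end Ball

theorem convexOn_univ_of_pos_homogeneous {F : Type*} [AddCommGroup F] [Module ℝ F] {N : F → ℝ}
    (hpos : ∀ x ≠ 0, 0 < N x) (hsmul : ∀ c > 0, ∀ x, N (c • x) = c * N x)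
    (hunit : ∀ x y, N x = 1 → N y = 1 → ∀ a b : ℝ, 0 < a → 0 < b → a + b = 1 →
      N (a • x + b • y) ≤ 1) :
    ConvexOn ℝ univ N := by
  have hN0 : N 0 = 0 := by
    have := hsmul 2 two_pos 0
    rw [smul_zero] at this
    linarith
  have hnorm : ∀ z ≠ 0, N ((N z)⁻¹ • z) = 1 := fun z hz => by
    rw [hsmul _ (inv_pos.2 (hpos z hz)), inv_mul_cancel₀ (hpos z hz).ne']
  refine convexOn_iff_forall_pos.2 ⟨convex_univ, fun x _ y _ a b ha hb hab => ?_⟩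
  simp only [smul_eq_mul]
  rcases eq_or_ne x 0 with rfl | hx
  · simp [hN0, hsmul b hb]
  rcases eq_or_ne y 0 with rfl | hy
  · simp [hN0, hsmul a ha]
  have hx' := hpos x hx
  have hy' := hpos y hy
  set s := a * N x + b * N y
  have hs : 0 < s := by positivity
  have hxy : a • x + b • y =
      s • ((a * N x / s) • ((N x)⁻¹ • x) + (b * N y / s) • ((N y)⁻¹ • y)) := by
    simp only [smul_add, smul_smul]
    congr 2 <;> field_simp
  rw [hxy, hsmul s hs]
  exact mul_le_of_le_one_right hs.le (hunit _ _ (hnorm x hx) (hnorm y hy) _ _ (by positivity)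
    (by positivity) (by rw [← add_div, div_self hs.ne']))

section Gauge

variable {E : Type*} [NormedAddCommGroup E] [NormedSpace ℝ E] [DecidableEq E] {f : E → ℝ}

noncomputable def ballGauge (f : E → ℝ) (p : ℝ) (x : E) : ℝ :=
  if x = 0 then 0 else rayIntegral f p x ^ (-(1 / p))

theorem ballGauge_nonneg (hf0 : ∀ x, 0 ≤ f x) (p : ℝ) (x : E) : 0 ≤ ballGauge f p x := by
  unfold ballGauge
  split_ifs
  exacts [le_rfl, rpow_nonneg (rayIntegral_nonneg hf0 p x) _]

theorem ballGauge_smul (hf0 : ∀ x, 0 ≤ f x) {p : ℝ} (hp : p ≠ 0) {c : ℝ} (hc : 0 < c)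
    (x : E) : ballGauge f p (c • x) = c * ballGauge f p x := by
  rcases eq_or_ne x 0 with rfl | hx
  · simp [ballGauge]
  rw [ballGauge, ballGauge, if_neg (smul_ne_zero hc.ne' hx), if_neg hx, rayIntegral_smul f p hc,
    mul_rpow (rpow_nonneg hc.le _) (rayIntegral_nonneg hf0 p x), ← rpow_mul hc.le,
    show -p * -(1 / p) = 1 by field_simp, rpow_one]

theorem rayIntegral_eq_one_of_ballGauge_eq_one (hf0 : ∀ x, 0 ≤ f x) {p : ℝ} (hp : p ≠ 0)
    {x : E} (h : ballGauge f p x = 1) : x ≠ 0 ∧ rayIntegral f p x = 1 := by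
  unfold ballGauge at h
  split_ifs at h with hx
  · exact absurd h zero_ne_one
  refine ⟨hx, ?_⟩
  have := congrArg (· ^ (-p)) h
  rwa [← rpow_mul (rayIntegral_nonneg hf0 p x), show -(1 / p) * -p = 1 by field_simp, rpow_one,
    one_rpow] at this

theorem ballGauge_le_one_of_one_le_rayIntegral {p : ℝ} (hp : 0 < p) {x : E}
    (h : 1 ≤ rayIntegral f p x) :
    ballGauge f p x ≤ 1 := by
  unfold ballGauge
  split_ifs
  exacts [zero_le_one, rpow_le_one_of_one_le_of_nonpos h (neg_nonpos.2 (by positivity))]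

variable [FiniteDimensional ℝ E] [MeasurableSpace E] [BorelSpace E] {μ : Measure E}
  [μ.IsAddHaarMeasure]

theorem convexOn_ballGauge (hf0 : ∀ x, 0 ≤ f x) (hfint : Integrable f μ)
    (h0 : (0 : E) ∈ interior {x | 0 < f x})
    (hlc : ConcaveOn ℝ {x | 0 < f x} fun x => log (f x)) {p : ℝ} (hp : 0 < p) :
    ConvexOn ℝ univ (ballGauge f p) := by
  refine convexOn_univ_of_pos_homogeneous (fun x hx => ?_)
    (fun c hc x => ballGauge_smul hf0 hp.ne' hc x) (fun x y hx hy a b ha hb hab => ?_)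
  · rw [ballGauge, if_neg hx]
    exact rpow_pos_of_pos ((isIntervalDensity_rayIntegrand hf0 hfint h0 hlc hp hx).integral_pos) _
  obtain ⟨hx0, hIx⟩ := rayIntegral_eq_one_of_ballGauge_eq_one hf0 hp.ne' hx
  obtain ⟨hy0, hIy⟩ := rayIntegral_eq_one_of_ballGauge_eq_one hf0 hp.ne' hy
  rcases eq_or_ne (a • x + b • y) 0 with hz | hz
  · rw [hz, ballGauge, if_pos rfl]
    exact zero_le_one
  · exact ballGauge_le_one_of_one_le_rayIntegral hp
      (one_le_rayIntegral_combo hf0 hfint h0 hlc hp hx0 hy0 hIx hIy ha hb hab hz)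

end Gauge

open MeasureTheory Classical in
theorem ball_bodies_general (k : ℕ) (f : EuclideanSpace ℝ (Fin k) → ℝ)
    (hf0 : ∀ x, 0 ≤ f x) (hfint : Integrable f)
    (h0 : (0 : EuclideanSpace ℝ (Fin k)) ∈ interior {x | 0 < f x})
    (hlc : ConcaveOn ℝ {x | 0 < f x} (fun x => Real.log (f x))) (p : ℝ) (hp : 0 < p) :
    letI N : EuclideanSpace ℝ (Fin k) → ℝ := fun x =>
      if x = 0 then 0 else (∫ t in Set.Ioi (0:ℝ), t ^ (p - 1) * f (t • x)) ^ (-(1 / p))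
    (∀ x, 0 ≤ N x) ∧
      (∀ (c : ℝ) (x : EuclideanSpace ℝ (Fin k)), 0 < c → N (c • x) = c * N x) ∧
      ConvexOn ℝ Set.univ N :=
  ⟨ballGauge_nonneg hf0 p, fun _ x hc => ballGauge_smul hf0 hp.ne' hc x,
    convexOn_ballGauge hf0 hfint h0 hlc hp⟩

open MeasureTheory Classical in
/-- Ball's construction: for a log-concave integrable `f : ℝᵏ → ℝ₊` with `0` in the
interior of its support and `p > 0`, the function
`x ↦ (∫₀^∞ t^{p-1} f(tx) dt)^{-1/p}` (extended by `0` at the origin) is nonnegative,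
positively homogeneous and convex, i.e. it is the Minkowski functional of a convex body
`L_p(f)` with `0` in its interior. -/
theorem ball_bodies (k : ℕ) (hk : 1 ≤ k) (f : EuclideanSpace ℝ (Fin k) → ℝ)
    (hf0 : ∀ x, 0 ≤ f x) (hfint : Integrable f)
    (h0 : (0 : EuclideanSpace ℝ (Fin k)) ∈ interior {x | 0 < f x})
    (hlc : ConcaveOn ℝ {x | 0 < f x} (fun x => Real.log (f x))) (p : ℝ) (hp : 0 < p) :
    letI N : EuclideanSpace ℝ (Fin k) → ℝ := fun x =>
      if x = 0 then 0 else (∫ t in Set.Ioi (0:ℝ), t ^ (p - 1) * f (t • x)) ^ (-(1 / p))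
    (∀ x, 0 ≤ N x) ∧
      (∀ (c : ℝ) (x : EuclideanSpace ℝ (Fin k)), 0 < c → N (c • x) = c * N x) ∧
      ConvexOn ℝ Set.univ N :=
  ball_bodies_general k f hf0 hfint h0 hlc p hp
end

section
/- Let f : ℝᵏ → ℝ₊ be a log-concave integrable function with 0 in the interior of its support such that ∫_{ℝᵏ} ⟨x,u⟩ f(x) dx = 0 for all u ∈ ℝᵏ. Then the centroid of the convex body L_{k+1}(f) is at the origin. -/
/-!
Along the ray through a unit vector `θ`, the body `L = L_{k+1}(f)` is the segment
`(0, ρ(θ)]` with `ρ(θ)^{k+1} = ∫₀^∞ t^k f(tθ) dt`. Integrating in polar coordinates, both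
`∫_L x dx` and `∫ f(x) x dx` become integrals over the sphere of
`(∫₀^∞ t^k f(tθ) dt) θ`, the first with an extra factor `1/(k+1)`; so the centroid of `L`
is a multiple of the barycenter of `f`, which vanishes.

Log-concavity makes all these integrals finite: the superlevel set `{f ≥ f(0)/2}` is convex,
contains a ball around `0` and has finite measure, hence is bounded, and concavity of `log f`
along rays turns this into exponential decay of `f`.
-/

open MeasureTheory
open scoped RealInnerProductSpace

open Set Metric Filter

namespace MeasureTheory.Measure

lemma integral_volumeIoiPow {F : Type*} [NormedAddCommGroup F] [NormedSpace ℝ F] (n : ℕ)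
    (g : ℝ → F) : ∫ r, g r ∂volumeIoiPow n = ∫ r in Ioi (0 : ℝ), r ^ n • g r := by
  simp only [volumeIoiPow, ENNReal.ofReal]
  rw [integral_withDensity_eq_integral_smul (by fun_prop),
    integral_subtype_comap measurableSet_Ioi fun r ↦ Real.toNNReal (r ^ n) • g r]
  refine setIntegral_congr_fun measurableSet_Ioi fun r hr ↦ ?_
  rw [NNReal.smul_def, Real.coe_toNNReal _ (pow_nonneg hr.out.le _)]

variable {E F : Type*} [NormedAddCommGroup E] [NormedSpace ℝ E] [MeasurableSpace E]
  [BorelSpace E] [FiniteDimensional ℝ E] [Nontrivial E] [NormedAddCommGroup F]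
  [NormedSpace ℝ F] (μ : Measure E) [μ.IsAddHaarMeasure]

theorem integral_eq_integral_toSphere_Ioi {G : E → F} (hG : Integrable G μ) :
    ∫ x, G x ∂μ = ∫ θ : sphere (0 : E) 1,
      (∫ r in Ioi (0 : ℝ), r ^ (Module.finrank ℝ E - 1) • G (r • (θ : E)))
        ∂μ.toSphere := by
  have hemb := Homeomorph.measurableEmbedding (homeomorphUnitSphereProd E)
  set H : sphere (0 : E) 1 × Ioi (0 : ℝ) → F := fun p ↦ G (p.2.1 • p.1.1)
  have hH : ∀ x : ({0}ᶜ : Set E), H (homeomorphUnitSphereProd E x) = G x := fun x ↦ by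
    simp [H, smul_smul, norm_ne_zero_iff.2 x.2]
  have hGc : Integrable (fun x : ({0}ᶜ : Set E) ↦ G x) (μ.comap (↑)) :=
    (integrableOn_iff_comap_subtypeVal (measurableSet_singleton (0 : E)).compl).1
      hG.integrableOn
  have hHint : Integrable H (μ.toSphere.prod (volumeIoiPow (Module.finrank ℝ E - 1))) := by
    rw [← μ.measurePreserving_homeomorphUnitSphereProd.integrable_comp_emb hemb]
    simpa only [Function.comp_def, hH] using hGc
  calc ∫ x, G x ∂μ = ∫ x : ({0}ᶜ : Set E), G x ∂(μ.comap (↑)) := by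
        rw [integral_subtype_comap (measurableSet_singleton _).compl, restrict_compl_singleton]
    _ = ∫ p, H p ∂(μ.toSphere.prod (volumeIoiPow (Module.finrank ℝ E - 1))) := by
        rw [← μ.measurePreserving_homeomorphUnitSphereProd.integral_comp hemb]
        simp only [hH]
    _ = _ := by
        rw [integral_prod H hHint]
        exact congrArg _ (funext fun θ ↦ integral_volumeIoiPow _ fun r ↦ G (r • (θ : E)))

end MeasureTheory.Measure

lemma integrableOn_pow_mul_exp_neg_mul (n : ℕ) {c : ℝ} (hc : 0 < c) :
    IntegrableOn (fun t : ℝ ↦ t ^ n * Real.exp (-c * t)) (Ioi 0) := by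
  refine (integrableOn_rpow_mul_exp_neg_mul_rpow (s := n) (p := 1)
    (by linarith [n.cast_nonneg (α := ℝ)]) one_pos hc).congr_fun (fun t _ ↦ ?_)
    measurableSet_Ioi
  simp [Real.rpow_natCast]

lemma setIntegral_Ioi_indicator_pow_le (n : ℕ) {F : ℝ} (hF : 0 ≤ F) :
    ∫ r in Ioi (0 : ℝ), {r : ℝ | r ^ (n + 1) ≤ F}.indicator (· ^ n) r = F / (n + 1) := by
  set ρ := F ^ ((n + 1 : ℕ) : ℝ)⁻¹
  have hρ : 0 ≤ ρ := Real.rpow_nonneg hF _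
  have hset : Ioi 0 ∩ {r : ℝ | r ^ (n + 1) ≤ F} = Ioc 0 ρ := by
    ext r
    simp only [mem_inter_iff, mem_Ioi, mem_ofPred_eq, mem_Ioc, and_congr_right_iff]
    intro hr
    rw [Real.le_rpow_inv_iff_of_pos hr.le hF (by positivity), Real.rpow_natCast]
  rw [integral_indicator (measurableSet_le (by fun_prop) measurable_const),
    Measure.restrict_restrict (measurableSet_le (by fun_prop) measurable_const), inter_comm, hset,
    ← intervalIntegral.integral_of_le hρ, integral_pow,
    Real.rpow_inv_natCast_pow hF n.succ_ne_zero]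
  simp

section RadialMoment

variable {E : Type*} [NormedAddCommGroup E] [NormedSpace ℝ E]

noncomputable def radialMoment (p : ℕ) (f : E → ℝ) (x : E) : ℝ :=
  ∫ t in Ioi (0 : ℝ), t ^ p * f (t • x)

/-- Ball's body `L_{p+1}(f)`: its radial function in the direction `x` is
`radialMoment p f x ^ (1 / (p + 1))`. -/
def momentBody (p : ℕ) (f : E → ℝ) : Set E := {x | x = 0 ∨ 1 ≤ radialMoment p f x}

lemma radialMoment_smul (p : ℕ) (f : E → ℝ) (x : E) {r : ℝ} (hr : 0 < r) :
    radialMoment p f (r • x) = (r ^ (p + 1))⁻¹ * radialMoment p f x := by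
  have hscale : ∀ t : ℝ,
      t ^ p * f (t • r • x) = (r ^ p)⁻¹ * ((r * t) ^ p * f ((r * t) • x)) := fun t ↦ by
    rw [smul_smul, mul_comm t r, mul_pow]; field_simp
  simp only [radialMoment, hscale, integral_const_mul,
    integral_comp_mul_left_Ioi (fun s ↦ s ^ p * f (s • x)) 0 hr, mul_zero, smul_eq_mul]
  rw [pow_succ, mul_inv, mul_assoc]

lemma radialMoment_nonneg {f : E → ℝ} (hf : ∀ x, 0 ≤ f x) (p : ℕ) (x : E) :
    0 ≤ radialMoment p f x :=
  setIntegral_nonneg measurableSet_Ioi fun _ ht ↦ mul_nonneg (pow_nonneg ht.out.le _) (hf _)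

lemma smul_mem_momentBody_iff (p : ℕ) (f : E → ℝ) {θ : E} (hθ : θ ≠ 0) {r : ℝ}
    (hr : 0 < r) :
    r • θ ∈ momentBody p f ↔ r ^ (p + 1) ≤ radialMoment p f θ := by
  rw [momentBody, Set.mem_ofPred_eq, radialMoment_smul p f θ hr, ← div_eq_inv_mul,
    one_le_div (pow_pos hr _)]
  simp [hr.ne', hθ]

lemma radialMoment_le_of_le_mul_exp {f : E → ℝ} (hf0 : ∀ x, 0 ≤ f x) {C c : ℝ}
    (hc : 0 < c) (hfC : ∀ x, f x ≤ C * Real.exp (-c * ‖x‖)) (p : ℕ) {θ : E}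
    (hθ : ‖θ‖ = 1) :
    radialMoment p f θ ≤ ∫ t in Ioi (0 : ℝ), C * (t ^ p * Real.exp (-c * t)) := by
  have hpos : ∀ᵐ t ∂volume.restrict (Ioi (0 : ℝ)), 0 < t :=
    ae_restrict_mem measurableSet_Ioi
  refine integral_mono_of_nonneg ?_ ((integrableOn_pow_mul_exp_neg_mul p hc).const_mul C) ?_
    <;> filter_upwards [hpos] with t ht
  · exact mul_nonneg (pow_nonneg ht.le _) (hf0 _)
  have hft := hfC (t • θ)
  rw [norm_smul, hθ, mul_one, Real.norm_of_nonneg ht.le] at hft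
  calc t ^ p * f (t • θ) ≤ t ^ p * (C * Real.exp (-c * t)) := by have := ht.le; gcongr
    _ = _ := by ring

lemma momentBody_subset_closedBall {p : ℕ} {f : E → ℝ} {B : ℝ}
    (hB : ∀ θ, ‖θ‖ = 1 → radialMoment p f θ ≤ B) :
    momentBody p f ⊆ closedBall 0 (max 1 B) := by
  intro x hx
  rw [mem_closedBall_zero_iff]
  rcases eq_or_ne x 0 with rfl | hx0
  · simp
  set θ := ‖x‖⁻¹ • x
  have hθ : ‖θ‖ = 1 := norm_smul_inv_norm hx0
  have hxθ : x = ‖x‖ • θ := by simp [θ, smul_smul, hx0]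
  rw [hxθ, smul_mem_momentBody_iff p f (norm_ne_zero_iff.1 (hθ ▸ one_ne_zero))
    (norm_pos_iff.2 hx0)] at hx
  rcases le_or_gt ‖x‖ 1 with hx1 | hx1
  · exact hx1.trans (le_max_left _ _)
  · calc ‖x‖ ≤ ‖x‖ ^ (p + 1) := le_self_pow₀ hx1.le p.succ_ne_zero
      _ ≤ B := hx.trans (hB θ hθ)
      _ ≤ max 1 B := le_max_right _ _

variable [MeasurableSpace E] [BorelSpace E]

lemma measurable_radialMoment {f : E → ℝ} (hf : Measurable f) (p : ℕ) :
    Measurable (radialMoment p f) := by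
  have : StronglyMeasurable fun q : E × ℝ ↦ q.2 ^ p * f (q.2 • q.1) :=
    (measurable_snd.pow_const p |>.mul (hf.comp (by fun_prop))).stronglyMeasurable
  exact (this.integral_prod_right' (ν := volume.restrict (Ioi 0))).measurable

lemma measurableSet_momentBody {f : E → ℝ} (hf : Measurable f) (p : ℕ) :
    MeasurableSet (momentBody p f) :=
  (measurableSet_singleton 0).union (measurable_radialMoment hf p measurableSet_Ici)

variable [FiniteDimensional ℝ E] {μ : Measure E} [μ.IsAddHaarMeasure]

lemma radialMoment_ae_congr {f g : E → ℝ} (hfg : f =ᵐ[μ] g) (p : ℕ) :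
    radialMoment p f =ᵐ[μ] radialMoment p g := by
  set N := toMeasurable μ {x | f x ≠ g x}
  have hN : μ N = 0 := by rw [measure_toMeasurable]; exact ae_iff.1 hfg
  have hray : ∀ᵐ x ∂μ, ∀ᵐ t ∂volume.restrict (Ioi (0 : ℝ)), t • x ∉ N := by
    have hmeas : MeasurableSet {q : E × ℝ | q.2 • q.1 ∉ N} :=
      (measurableSet_toMeasurable _ _).compl.preimage (by fun_prop)
    rw [Measure.ae_ae_comm hmeas]
    filter_upwards [self_mem_ae_restrict measurableSet_Ioi] with t ht
    rw [ae_iff]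
    simp only [not_not]
    exact (Measure.addHaar_preimage_smul μ ht.out.ne' N).trans (by rw [hN, mul_zero])
  filter_upwards [hray] with x hx
  refine integral_congr_ae (hx.mono fun t ht ↦ ?_)
  simp only [not_not.1 fun h ↦ ht (subset_toMeasurable _ _ h)]

lemma momentBody_ae_eq {f g : E → ℝ} (hfg : f =ᵐ[μ] g) (p : ℕ) :
    momentBody p f =ᵐ[μ] momentBody p g :=
  eventuallyEq_set.2 <| (radialMoment_ae_congr hfg p).mono fun x hx ↦ by simp [momentBody, hx]

end RadialMoment

section Centroid

variable {E : Type*} [NormedAddCommGroup E] [NormedSpace ℝ E] [MeasurableSpace E]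
  [BorelSpace E] [FiniteDimensional ℝ E] [Nontrivial E] (μ : Measure E) [μ.IsAddHaarMeasure]

local notation "dim" => Module.finrank ℝ E

lemma integral_smul_self_eq_integral_toSphere {f : E → ℝ}
    (hf : Integrable (fun x ↦ f x • x) μ) :
    ∫ x, f x • x ∂μ
      = ∫ θ : sphere (0 : E) 1, radialMoment dim f θ • (θ : E) ∂μ.toSphere := by
  rw [Measure.integral_eq_integral_toSphere_Ioi μ hf]
  congr 1 with θ
  have hray : ∀ r : ℝ, r ^ (dim - 1) • f (r • (θ : E)) • r • (θ : E)
      = (r ^ dim * f (r • (θ : E))) • (θ : E) := fun r ↦ by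
    rw [smul_smul, smul_smul, ← pow_sub_one_mul Module.finrank_pos.ne' r]; ring_nf
  simp only [hray, integral_smul_const, radialMoment]

lemma setIntegral_momentBody_eq_integral_toSphere {f : E → ℝ} (hf : Measurable f)
    (hf0 : ∀ x, 0 ≤ f x) {B : ℝ}
    (hB : ∀ θ : E, ‖θ‖ = 1 → radialMoment dim f θ ≤ B) :
    ∫ x in momentBody dim f, x ∂μ = ∫ θ : sphere (0 : E) 1,
      ((dim + 1 : ℝ)⁻¹ * radialMoment dim f θ) • (θ : E) ∂μ.toSphere := by
  have hL := measurableSet_momentBody hf dim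
  have hint : Integrable ((momentBody dim f).indicator (fun x ↦ x)) μ :=
    (integrable_indicator_iff hL).2 <| (continuous_id.continuousOn.integrableOn_compact
      (isCompact_closedBall 0 _)).mono_set (momentBody_subset_closedBall hB)
  rw [← integral_indicator hL, Measure.integral_eq_integral_toSphere_Ioi μ hint]
  congr 1 with θ
  have hθ : (θ : E) ≠ 0 := ne_zero_of_mem_unit_sphere θ
  have hray : ∀ r ∈ Ioi (0 : ℝ),
      r ^ (dim - 1) • (momentBody dim f).indicator (fun x ↦ x) (r • (θ : E))
        = {r : ℝ | r ^ (dim + 1) ≤ radialMoment dim f θ}.indicator (· ^ dim) r • (θ : E) :=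
      by
    intro r hr
    by_cases hmem : r • (θ : E) ∈ momentBody dim f
    · have hle : r ∈ {r : ℝ | r ^ (dim + 1) ≤ radialMoment dim f θ} :=
        (smul_mem_momentBody_iff dim f hθ hr).1 hmem
      rw [indicator_of_mem hmem, indicator_of_mem hle, smul_smul,
        pow_sub_one_mul Module.finrank_pos.ne']
    · have hle : r ∉ {r : ℝ | r ^ (dim + 1) ≤ radialMoment dim f θ} :=
        fun h ↦ hmem ((smul_mem_momentBody_iff dim f hθ hr).2 h)
      rw [indicator_of_notMem hmem, indicator_of_notMem hle, smul_zero, zero_smul]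
  rw [setIntegral_congr_fun measurableSet_Ioi hray, integral_smul_const,
    setIntegral_Ioi_indicator_pow_le dim (radialMoment_nonneg hf0 dim θ), div_eq_inv_mul]

lemma integrable_smul_self_of_le_mul_exp {f : E → ℝ} (hf : AEStronglyMeasurable f μ)
    (hf0 : ∀ x, 0 ≤ f x) {C c : ℝ} (hc : 0 < c)
    (hfC : ∀ x, f x ≤ C * Real.exp (-c * ‖x‖)) :
    Integrable (fun x ↦ f x • x) μ := by
  have hdom : Integrable (fun x : E ↦ C * (‖x‖ * Real.exp (-c * ‖x‖))) μ := by
    refine (integrable_fun_norm_addHaar μ (f := fun y ↦ C * (y * Real.exp (-c * y)))).2 ?_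
    refine IntegrableOn.congr_fun ((integrableOn_pow_mul_exp_neg_mul dim hc).const_mul C)
      (fun y _ ↦ ?_) measurableSet_Ioi
    simp only [smul_eq_mul, ← pow_sub_one_mul (Module.finrank_pos (R := ℝ) (M := E)).ne' y]
    ring
  refine hdom.mono' (hf.smul aestronglyMeasurable_id) (ae_of_all _ fun x ↦ ?_)
  rw [norm_smul, Real.norm_of_nonneg (hf0 x)]
  nlinarith [hfC x, norm_nonneg x]

theorem setIntegral_momentBody_eq_smul_integral {f : E → ℝ} (hf : Measurable f)
    (hf0 : ∀ x, 0 ≤ f x) {C c : ℝ} (hc : 0 < c)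
    (hfC : ∀ x, f x ≤ C * Real.exp (-c * ‖x‖)) :
    ∫ x in momentBody dim f, x ∂μ = (dim + 1 : ℝ)⁻¹ • ∫ x, f x • x ∂μ := by
  rw [setIntegral_momentBody_eq_integral_toSphere μ hf hf0
      fun θ ↦ radialMoment_le_of_le_mul_exp hf0 hc hfC dim,
    integral_smul_self_eq_integral_toSphere μ
      (integrable_smul_self_of_le_mul_exp μ hf.aestronglyMeasurable hf0 hc hfC), ← integral_smul]
  simp only [smul_smul]

end Centroid

section LogConcave

variable {E : Type*} [NormedAddCommGroup E] [NormedSpace ℝ E]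

theorem Convex.exists_forall_norm_lt [MeasurableSpace E] [BorelSpace E]
    [FiniteDimensional ℝ E] (μ : Measure E) [μ.IsAddHaarMeasure] {K : Set E} (hK : Convex ℝ K)
    {ε : ℝ} (hε : 0 < ε) (hball : closedBall 0 ε ⊆ K) (hKμ : μ K ≠ ⊤) :
    ∃ R, ∀ x ∈ K, ‖x‖ < R := by
  obtain ⟨N, hN⟩ :=
    ENNReal.exists_nat_mul_gt (measure_ball_pos μ (0 : E) (half_pos hε)).ne' hKμ
  refine ⟨2 * ε * N, fun x hx ↦ ?_⟩
  by_contra! hxN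
  have hN0 : 0 < N := Nat.pos_of_ne_zero fun h ↦ by simp [h] at hN
  have hx0 : 0 < ‖x‖ := lt_of_lt_of_le (by positivity) hxN
  -- the balls of radius `ε / 2` centred at `(j ε / ‖x‖) x`, `j < N`, are disjoint and lie
  -- in `K`
  set center : ℕ → E := fun j ↦ (j * ε / ‖x‖) • x
  have hsub : ∀ j ∈ Finset.range N, ball (center j) (ε / 2) ⊆ K := by
    intro j hj z hz
    have hjN : (j : ℝ) + 1 ≤ N := by exact_mod_cast Finset.mem_range.1 hj
    have hy : (2 : ℝ) • center j ∈ K := by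
      rw [smul_smul]
      refine hK.smul_mem_of_zero_mem (hball (mem_closedBall_self hε.le)) hx ⟨by positivity, ?_⟩
      rw [mul_div_assoc', div_le_one hx0]
      nlinarith
    have hb : (2 : ℝ) • z - (2 : ℝ) • center j ∈ K := by
      refine hball (mem_closedBall_zero_iff.2 ?_)
      rw [← smul_sub, norm_smul, Real.norm_two, ← dist_eq_norm]
      linarith [mem_ball.1 hz]
    convert hK hy hb (by norm_num : (0 : ℝ) ≤ 1 / 2) (by norm_num : (0 : ℝ) ≤ 1 / 2)
      (by norm_num) using 1
    module
  have hdisj : (Finset.range N : Set ℕ).PairwiseDisjoint fun j ↦ ball (center j) (ε / 2) := by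
    intro i _ j _ hij
    refine ball_disjoint_ball ?_
    have hij' : (1 : ℝ) ≤ |(i : ℝ) - j| := by
      have := Int.one_le_abs (sub_ne_zero.2 (Int.ofNat_inj.not.2 hij))
      exact_mod_cast this
    rw [dist_eq_norm, ← sub_smul, norm_smul, Real.norm_eq_abs, ← sub_div, ← sub_mul, abs_div,
      abs_mul, abs_of_pos hε, abs_of_pos hx0, div_mul_cancel₀ _ hx0.ne']
    nlinarith
  have hmeas := measure_biUnion_finset hdisj (fun j _ ↦ measurableSet_ball) (μ := μ)
  simp only [Measure.addHaar_ball_center, Finset.sum_const, Finset.card_range,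
    nsmul_eq_mul] at hmeas
  exact (hN.trans_le (hmeas ▸ measure_mono (iUnion₂_subset hsub))).false

variable {f : E → ℝ}

lemma convex_setOf_le_of_concaveOn_log (hlc : ConcaveOn ℝ {x | 0 < f x} fun x ↦ Real.log (f x))
    {a : ℝ} (ha : 0 < a) : Convex ℝ {x | a ≤ f x} := by
  convert hlc.quasiconcaveOn (Real.log a) using 1
  ext x
  refine ⟨fun hx ↦ ⟨ha.trans_le hx, Real.log_le_log ha hx⟩, fun ⟨hx, hlog⟩ ↦ ?_⟩
  exact (Real.log_le_log_iff ha hx).1 hlog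

lemma le_mul_exp_of_log_le {a b c : ℝ} (ha : 0 < a) (hb : 0 < b)
    (h : Real.log b ≤ Real.log a + c) :
    b ≤ a * Real.exp c := by
  rwa [← Real.log_le_log_iff hb (by positivity), Real.log_mul ha.ne' (Real.exp_pos c).ne',
    Real.log_exp]

lemma le_mul_exp_norm_of_concaveOn_log
    (hlc : ConcaveOn ℝ {x | 0 < f x} fun x ↦ Real.log (f x)) (hf0 : 0 < f 0) {ε : ℝ}
    (hε : 0 < ε) (hball : ∀ z, ‖z‖ = ε → f 0 / 2 < f z) (x : E) :
    f x ≤ f 0 * Real.exp (Real.log 2 / ε * ‖x‖) := by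
  rcases le_or_gt (f x) 0 with hfx | hfx
  · exact hfx.trans (by positivity)
  rcases eq_or_ne x 0 with rfl | hx0
  · simp
  have ht : 0 < ‖x‖ := norm_pos_iff.2 hx0
  -- `0` lies between `x` and the point `z` at distance `ε` on the opposite ray
  set z := -(ε / ‖x‖) • x with hzdef
  have hz : f 0 / 2 < f z := hball z (by simp [z, norm_smul, abs_of_pos hε, ht.ne'])
  set s := ε / (‖x‖ + ε) with hs
  set s' := ‖x‖ / (‖x‖ + ε) with hs'
  have hss' : s + s' = 1 := by rw [hs, hs', ← add_div, add_comm, div_self (by positivity)]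
  have hs's : s' = s * (‖x‖ / ε) := by rw [hs, hs']; field_simp
  have hs'z : s' * (ε / ‖x‖) = s := by rw [hs's]; field_simp
  have hcomb : s • x + s' • z = 0 := by
    rw [hzdef, neg_smul, smul_neg, smul_smul, hs'z, add_neg_cancel]
  have hconc := hlc.2 hfx ((half_pos hf0).trans hz) (by positivity : 0 ≤ s)
    (by positivity : 0 ≤ s') hss'
  simp only [hcomb, smul_eq_mul] at hconc
  have hlogz : Real.log (f 0) - Real.log 2 < Real.log (f z) := by
    rw [← Real.log_div hf0.ne' two_ne_zero]
    exact Real.log_lt_log (half_pos hf0) hz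
  refine le_mul_exp_of_log_le hf0 hfx (le_of_mul_le_mul_left ?_ (by positivity : 0 < s))
  calc s * Real.log (f x) ≤ Real.log (f 0) - s' * Real.log (f z) := by linarith
    _ ≤ Real.log (f 0) - s' * (Real.log (f 0) - Real.log 2) := by gcongr
    _ = s * (Real.log (f 0) + Real.log 2 / ε * ‖x‖) := by
      linear_combination (-Real.log (f 0)) * hss' + Real.log 2 * hs's

lemma le_mul_exp_neg_norm_of_concaveOn_log
    (hlc : ConcaveOn ℝ {x | 0 < f x} fun x ↦ Real.log (f x)) (hf0 : 0 < f 0) {R : ℝ}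
    (hR : 0 < R) (hdrop : ∀ y, ‖y‖ = R → f y < f 0 / 2) {x : E}
    (hx : R ≤ ‖x‖) : f x ≤ f 0 * Real.exp (-(Real.log 2 / R) * ‖x‖) := by
  rcases le_or_gt (f x) 0 with hfx | hfx
  · exact hfx.trans (by positivity)
  have ht : 0 < ‖x‖ := hR.trans_le hx
  set s := R / ‖x‖ with hsdef
  have hs : 0 < s := by positivity
  have hs1 : 0 ≤ 1 - s := sub_nonneg.2 ((div_le_one ht).2 hx)
  have hy : ‖s • x‖ = R := by
    rw [norm_smul, Real.norm_of_nonneg hs.le, hsdef, div_mul_cancel₀ _ ht.ne']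
  have hcomb : s • x + (1 - s) • (0 : E) = s • x := by simp
  have hyS : 0 < f (s • x) := hcomb ▸ hlc.1 hfx hf0 hs.le hs1 (by ring)
  have hconc := hlc.2 hfx hf0 hs.le hs1 (by ring)
  simp only [hcomb, smul_eq_mul] at hconc
  have hlogy : Real.log (f (s • x)) < Real.log (f 0) - Real.log 2 := by
    rw [← Real.log_div hf0.ne' two_ne_zero]
    exact Real.log_lt_log hyS (hdrop _ hy)
  have hsR : s * (Real.log 2 / R * ‖x‖) = Real.log 2 := by rw [hsdef]; field_simp
  refine le_mul_exp_of_log_le hf0 hfx (le_of_mul_le_mul_left ?_ hs)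
  linear_combination hconc + hlogy.le + hsR

variable [MeasurableSpace E] [BorelSpace E] [FiniteDimensional ℝ E]

theorem exists_le_mul_exp_neg_norm_of_concaveOn_log (μ : Measure E) [μ.IsAddHaarMeasure]
    (hf0 : ∀ x, 0 ≤ f x) (hfint : Integrable f μ) (h0 : 0 ∈ interior {x | 0 < f x})
    (hlc : ConcaveOn ℝ {x | 0 < f x} fun x ↦ Real.log (f x)) :
    ∃ C c : ℝ, 0 < c ∧ ∀ x, f x ≤ C * Real.exp (-c * ‖x‖) := by
  have hf00 : 0 < f 0 := (interior_subset h0 : (0 : E) ∈ {x | 0 < f x})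
  have hcont : ContinuousAt f 0 := by
    have hlog := (hlc.continuousOn_interior 0 h0).continuousAt (isOpen_interior.mem_nhds h0)
    refine (Real.continuous_exp.continuousAt.comp hlog).congr ?_
    filter_upwards [isOpen_interior.mem_nhds h0] with x hx
    exact Real.exp_log (interior_subset hx : x ∈ {x | 0 < f x})
  obtain ⟨ε, hε, hball⟩ := nhds_basis_closedBall.eventually_iff.1
    (hcont.eventually (lt_mem_nhds (half_lt_self hf00)))
  have hKμ : μ {x | f 0 / 2 ≤ f x} ≠ ⊤ := by
    simpa [Real.norm_of_nonneg (hf0 _)] using (hfint.measure_norm_ge_lt_top (half_pos hf00)).ne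
  obtain ⟨R, hR⟩ := (convex_setOf_le_of_concaveOn_log hlc (half_pos hf00)).exists_forall_norm_lt
    μ hε (fun x hx ↦ (hball hx).le) hKμ
  have hR0 : 0 < R := by simpa using hR 0 (half_le_self hf00.le)
  have hdrop : ∀ y, ‖y‖ = R → f y < f 0 / 2 :=
    fun y hy ↦ lt_of_not_ge fun h ↦ (hR y h).ne hy
  have hnear := le_mul_exp_norm_of_concaveOn_log hlc hf00 hε
    fun z hz ↦ hball (mem_closedBall_zero_iff.2 hz.le)
  have ha : 0 ≤ Real.log 2 / ε := by positivity
  have hc : 0 < Real.log 2 / R := by positivity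
  refine ⟨f 0 * Real.exp ((Real.log 2 / ε + Real.log 2 / R) * R), Real.log 2 / R, hc,
    fun x ↦ ?_⟩
  rw [mul_assoc, ← Real.exp_add]
  rcases le_total ‖x‖ R with hx | hx
  · refine (hnear x).trans ?_
    gcongr
    nlinarith
  · refine (le_mul_exp_neg_norm_of_concaveOn_log hlc hf00 hR0 hdrop hx).trans ?_
    gcongr
    nlinarith

end LogConcave

lemma exists_measurable_ae_eq_of_le {α : Type*} [MeasurableSpace α] {μ : Measure α}
    {f b : α → ℝ} (hf : AEMeasurable f μ) (hb : Measurable b) (hf0 : ∀ x, 0 ≤ f x)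
    (hfb : ∀ x, f x ≤ b x) :
    ∃ g, Measurable g ∧ f =ᵐ[μ] g ∧ (∀ x, 0 ≤ g x) ∧ ∀ x, g x ≤ b x :=
  ⟨fun x ↦ max 0 (min (hf.mk f x) (b x)), measurable_const.max (hf.measurable_mk.min hb),
    hf.ae_eq_mk.mono fun x hx ↦ by simp [← hx, hf0 x, hfb x], fun _ ↦ le_max_left _ _,
    fun x ↦ max_le ((hf0 x).trans (hfb x)) (min_le_right _ _)⟩

lemma integral_smul_self_eq_zero {E : Type*} [NormedAddCommGroup E] [InnerProductSpace ℝ E]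
    [CompleteSpace E] [MeasurableSpace E] {μ : Measure E} {f : E → ℝ}
    (hf : Integrable (fun x ↦ f x • x) μ)
    (hbar : ∀ u : E, ∫ x, ⟪x, u⟫ * f x ∂μ = 0) :
    ∫ x, f x • x ∂μ = 0 := by
  refine inner_self_eq_zero (𝕜 := ℝ) |>.1 ?_
  rw [← integral_inner hf, ← hbar (∫ x, f x • x ∂μ)]
  congr 1 with x
  rw [real_inner_smul_right, real_inner_comm x, mul_comm]

/-- If `f : ℝᵏ → ℝ₊` is log-concave, integrable, with `0` in the interior of its
support and with barycenter at the origin (`∫ ⟨x,u⟩ f(x) dx = 0` for all `u`), then the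
centroid of the convex body `L_{k+1}(f)` is at the origin. -/
theorem centroid_L_k_add_one (k : ℕ) (hk : 1 ≤ k) (f : EuclideanSpace ℝ (Fin k) → ℝ)
    (hf0 : ∀ x, 0 ≤ f x) (hfint : Integrable f)
    (h0 : (0 : EuclideanSpace ℝ (Fin k)) ∈ interior {x | 0 < f x})
    (hlc : ConcaveOn ℝ {x | 0 < f x} (fun x => Real.log (f x)))
    (hbar : ∀ u : EuclideanSpace ℝ (Fin k), ∫ x, ⟪x, u⟫ * f x = 0) :
    letI L : Set (EuclideanSpace ℝ (Fin k)) :=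
      {x | x = 0 ∨ 1 ≤ ∫ t in Set.Ioi (0:ℝ), t ^ ((k : ℝ) + 1 - 1) * f (t • x)}
    ∫ x in L, x = 0 := by
  have : Nonempty (Fin k) := ⟨⟨0, hk⟩⟩
  obtain ⟨C, c, hc, hfC⟩ := exists_le_mul_exp_neg_norm_of_concaveOn_log volume hf0 hfint h0 hlc
  -- `f` is only a.e. measurable, so `momentBody k f` need not be measurable: pass to a
  -- measurable version of `f` that keeps the exponential bound everywhere
  obtain ⟨g, hg, hfg, hg0, hgC⟩ :=
    exists_measurable_ae_eq_of_le hfint.aemeasurable (by fun_prop) hf0 hfC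
  have hL : {x | x = 0 ∨ 1 ≤ ∫ t in Ioi (0 : ℝ), t ^ ((k : ℝ) + 1 - 1) * f (t • x)}
      = momentBody k f := by
    simp [momentBody, radialMoment]
  have hcentroid := setIntegral_momentBody_eq_smul_integral volume hg hg0 hc hgC
  rw [finrank_euclideanSpace_fin] at hcentroid
  have hgbar : ∫ x, g x • x = 0 := by
    refine integral_smul_self_eq_zero
      (integrable_smul_self_of_le_mul_exp volume hg.aestronglyMeasurable hg0 hc hgC) fun u ↦ ?_
    rw [← hbar u]
    exact integral_congr_ae (hfg.mono fun x hx ↦ by simp only [hx])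
  show ∫ x in {x | _}, x = 0
  rw [hL, setIntegral_congr_set (momentBody_ae_eq hfg k), hcentroid, hgbar, smul_zero]
end

section
/- Let L be a convex body in ℝᵏ with centroid at the origin. Then −L ⊆ k·L; equivalently, for every unit vector θ, 1/k ≤ ‖θ‖_L/‖−θ‖_L ≤ k, where ‖·‖_L is the Minkowski functional of L. -/
/-!
Slice `L` by the hyperplanes `⟪u, x⟫ = t` for a unit vector `u`, let `A t` be the
`(k-1)`-volume of the slice and `m < 0 < M` the extreme values of `⟪u, ·⟫` on `L`.
The cone from a point at height `M` over the slice at height `s` lies in `L`, so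
`(M - t)^(k-1) A s ≤ (M - s)^(k-1) A t` for `s ≤ t ≤ M`; hence `A t - A 0 ((M - t)/M)^(k-1)`
has the sign of `t`. As the centroid is `0`, `∫ A t · t dt = 0`, which forces
`∫_m^M (M - t)^(k-1) t dt ≤ 0`, i.e. `M ≤ k (-m)`. Thus every linear functional satisfies
`-min_L l ≤ k max_L l`, and since a closed convex set is the intersection of the half-spaces
containing it, `-L ⊆ k L`. This puts `0` in the interior of `L`, and the gauge bounds follow from
`gauge (k L) = k⁻¹ gauge L`.
-/

open MeasureTheory Pointwise Set Module

lemma setIntegral_pos_of_nonneg_of_measure_setOf_eq_zero {X : Type*} [MeasurableSpace X]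
    {ν : Measure X} {s : Set X} {f : X → ℝ} (hs : MeasurableSet s) (hf : IntegrableOn f s ν)
    (hnn : ∀ x ∈ s, 0 ≤ f x) (hzero : ν {x | f x = 0} = 0) (hν : ν s ≠ 0) :
    0 < ∫ x in s, f x ∂ν := by
  rw [setIntegral_pos_iff_support_of_nonneg_ae (ae_restrict_of_forall_mem hs hnn) hf,
    show Function.support f ∩ s = s \ {x | f x = 0} by ext; simp [and_comm],
    measure_sdiff_null hzero]
  exact pos_iff_ne_zero.2 hν

lemma intervalIntegral_sub_pow_mul (a b : ℝ) (d : ℕ) :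
    ∫ t in a..b, (b - t) ^ d * t =
      (b - a) ^ (d + 1) * (b + (d + 1) * a) / ((d + 1) * (d + 2)) := by
  have h : ∀ t, (b - t) ^ d * t = (fun s => b * s ^ d - s ^ (d + 1)) (b - t) := fun t => by ring
  simp_rw [h]
  rw [intervalIntegral.integral_comp_sub_left (fun s => b * s ^ d - s ^ (d + 1)), sub_self,
    intervalIntegral.integral_sub (f := fun x => b * x ^ d) (g := fun x => x ^ (d + 1))
      ((continuous_const.mul (continuous_pow d)).intervalIntegrable _ _)
      ((continuous_pow _).intervalIntegrable _ _),
    intervalIntegral.integral_const_mul, integral_pow, integral_pow]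
  field_simp
  push_cast
  ring

section Slices

variable {F : Type*} [MeasurableSpace F] {μ : Measure F} {K : Set (ℝ × F)}

variable (μ) in
noncomputable def sliceVolume (K : Set (ℝ × F)) (t : ℝ) : ℝ := μ.real (Prod.mk t ⁻¹' K)

lemma sliceVolume_eq_zero_of_notMem_Icc {p q : ℝ × F} (hpmax : IsMaxOn Prod.fst K p)
    (hqmin : IsMinOn Prod.fst K q) {t : ℝ} (ht : t ∉ Icc q.1 p.1) : sliceVolume μ K t = 0 := by
  have : Prod.mk t ⁻¹' K = ∅ :=
    eq_empty_of_forall_notMem fun y (hy : (t, y) ∈ K) => ht ⟨hqmin hy, hpmax hy⟩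
  simp [sliceVolume, this]

lemma volume_prod_setOf_fst_eq [SFinite μ] (c : ℝ) :
    (volume : Measure ℝ).prod μ {x | x.1 = c} = 0 := by
  rw [show {x : ℝ × F | x.1 = c} = {c} ×ˢ univ by ext; simp, Measure.prod_prod,
    Real.volume_singleton, zero_mul]

lemma measure_slice_ne_top [TopologicalSpace F] [IsFiniteMeasureOnCompacts μ] (hK : IsCompact K)
    (t : ℝ) : μ (Prod.mk t ⁻¹' K) ≠ ⊤ :=
  ((measure_mono fun y (hy : (t, y) ∈ K) => (⟨(t, y), hy, rfl⟩ : y ∈ Prod.snd '' K))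
    |>.trans_lt (hK.image continuous_snd).measure_lt_top).ne

lemma integral_indicator_fst_slice (hK : MeasurableSet K) (t : ℝ) :
    ∫ y, K.indicator Prod.fst (t, y) ∂μ = sliceVolume μ K t * t := by
  have : (fun y => K.indicator Prod.fst (t, y)) = (Prod.mk t ⁻¹' K).indicator fun _ => t := rfl
  rw [this, integral_indicator_const _ (hK.preimage measurable_prodMk_left)]
  rfl

section Fubini

variable [TopologicalSpace F] [T2Space F] [OpensMeasurableSpace F] [IsFiniteMeasureOnCompacts μ]

lemma integrable_indicator_fst (hK : IsCompact K) :
    Integrable (K.indicator Prod.fst) ((volume : Measure ℝ).prod μ) :=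
  (integrable_indicator_iff hK.isClosed.measurableSet).2
    (continuous_fst.continuousOn.integrableOn_compact hK)

lemma integrable_sliceVolume_mul [SFinite μ] (hK : IsCompact K) :
    Integrable fun t => sliceVolume μ K t * t := by
  simpa only [integral_indicator_fst_slice (μ := μ) hK.isClosed.measurableSet] using
    (integrable_indicator_fst (μ := μ) hK).integral_prod_left

lemma integral_sliceVolume_mul [SFinite μ] (hK : IsCompact K) :
    ∫ t, sliceVolume μ K t * t = ∫ x in K, x.1 ∂(volume.prod μ) := by
  rw [← integral_indicator hK.isClosed.measurableSet,
    integral_prod _ (integrable_indicator_fst hK)]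
  simp only [integral_indicator_fst_slice hK.isClosed.measurableSet]

lemma exists_sliceVolume_pos [SFinite μ] (hK : IsCompact K)
    (hvol : (volume : Measure ℝ).prod μ K ≠ 0) :
    ∃ t, 0 < sliceVolume μ K t := by
  rw [Measure.prod_apply hK.isClosed.measurableSet] at hvol
  obtain ⟨t, ht⟩ : ∃ t, μ (Prod.mk t ⁻¹' K) ≠ 0 := by
    by_contra! h
    simp [h] at hvol
  exact ⟨t, ENNReal.toReal_pos ht (measure_slice_ne_top hK t)⟩

lemma fst_pos_of_isMaxOn [SFinite μ] {p : ℝ × F} (hKc : IsCompact K)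
    (hvol : (volume : Measure ℝ).prod μ K ≠ 0)
    (hcent : ∫ x in K, x.1 ∂(volume.prod μ) = 0) (hpmax : IsMaxOn Prod.fst K p) : 0 < p.1 := by
  by_contra! h
  have := setIntegral_pos_of_nonneg_of_measure_setOf_eq_zero hKc.isClosed.measurableSet
    (continuous_fst.continuousOn.integrableOn_compact hKc).neg
    (fun x hx => neg_nonneg.2 ((hpmax hx).trans h)) (by simpa using volume_prod_setOf_fst_eq 0)
    hvol
  simp [integral_neg, hcent] at this

lemma fst_neg_of_isMinOn [SFinite μ] {q : ℝ × F} (hKc : IsCompact K)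
    (hvol : (volume : Measure ℝ).prod μ K ≠ 0)
    (hcent : ∫ x in K, x.1 ∂(volume.prod μ) = 0) (hqmin : IsMinOn Prod.fst K q) : q.1 < 0 := by
  by_contra! h
  have := setIntegral_pos_of_nonneg_of_measure_setOf_eq_zero hKc.isClosed.measurableSet
    (continuous_fst.continuousOn.integrableOn_compact hKc) (fun x hx => h.trans (hqmin hx))
    (volume_prod_setOf_fst_eq 0) hvol
  simp [hcent] at this

end Fubini

end Slices

section Cone

variable {F : Type*} [NormedAddCommGroup F] [NormedSpace ℝ F] [FiniteDimensional ℝ F]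
  [MeasurableSpace F] [BorelSpace F] {μ : Measure F} [μ.IsAddHaarMeasure] {K : Set (ℝ × F)}
  {p q : ℝ × F}

lemma pow_mul_sliceVolume_le (hKc : IsCompact K) (hconv : Convex ℝ K) (hq : q ∈ K) {a b : ℝ}
    (ha : 0 ≤ a) (hb : 0 ≤ b) (hab : a + b = 1) (t : ℝ) :
    a ^ finrank ℝ F * sliceVolume μ K t ≤ sliceVolume μ K (a * t + b * q.1) := by
  have hsub : b • q.2 +ᵥ a • (Prod.mk t ⁻¹' K) ⊆ Prod.mk (a * t + b * q.1) ⁻¹' K := by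
    rintro _ ⟨_, ⟨y, hy, rfl⟩, rfl⟩
    show (_, _) ∈ K
    convert hconv hy hq ha hb hab using 1
    ext <;> simp [add_comm]
  calc a ^ finrank ℝ F * sliceVolume μ K t
      = μ.real (b • q.2 +ᵥ a • (Prod.mk t ⁻¹' K)) := by
        simp [sliceVolume, measureReal_def, measure_vadd, Measure.addHaar_smul,
          abs_of_nonneg ha, ENNReal.toReal_mul, ha]
    _ ≤ sliceVolume μ K (a * t + b * q.1) := measureReal_mono hsub (measure_slice_ne_top hKc _)

lemma abs_pow_mul_sliceVolume_le (hKc : IsCompact K) (hconv : Convex ℝ K) {r : ℝ × F}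
    (hr : r ∈ K) {s t : ℝ} (ht : t ∈ segment ℝ s r.1) :
    |r.1 - t| ^ finrank ℝ F * sliceVolume μ K s ≤
      |r.1 - s| ^ finrank ℝ F * sliceVolume μ K t := by
  obtain ⟨a, b, ha, hb, hab, rfl⟩ := ht
  have hdist : |r.1 - (a • s + b • r.1)| = a * |r.1 - s| := by
    rw [← abs_of_nonneg ha, ← abs_mul, abs_of_nonneg ha]
    congr 1
    simp only [smul_eq_mul]
    linear_combination (-r.1) * hab
  rw [hdist, mul_pow, mul_comm (a ^ _), mul_assoc]
  exact mul_le_mul_of_nonneg_left (pow_mul_sliceVolume_le hKc hconv hr ha hb hab s)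
    (by positivity)

lemma sliceVolume_pos_of_mem_Ioo (hconv : Convex ℝ K) (hKc : IsCompact K)
    (hvol : (volume : Measure ℝ).prod μ K ≠ 0) (hp : p ∈ K) (hq : q ∈ K)
    (hpmax : IsMaxOn Prod.fst K p) (hqmin : IsMinOn Prod.fst K q) {t : ℝ}
    (ht : t ∈ Ioo q.1 p.1) : 0 < sliceVolume μ K t := by
  obtain ⟨t₀, ht₀⟩ := exists_sliceVolume_pos hKc hvol
  have ht₀mem : t₀ ∈ Icc q.1 p.1 := by
    by_contra h
    exact ht₀.ne' (sliceVolume_eq_zero_of_notMem_Icc hpmax hqmin h)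
  obtain ⟨r, hr, hseg, hrt⟩ : ∃ r ∈ K, t ∈ segment ℝ t₀ r.1 ∧ r.1 ≠ t := by
    rcases le_total t₀ t with h | h
    · exact ⟨p, hp, by rw [segment_eq_Icc (h.trans ht.2.le)]; exact ⟨h, ht.2.le⟩, ht.2.ne'⟩
    · refine ⟨q, hq, ?_, ht.1.ne⟩
      rw [segment_symm, segment_eq_Icc (ht.1.le.trans h)]
      exact ⟨ht.1.le, h⟩
  have hrt' : 0 < |r.1 - t| := abs_pos.2 (sub_ne_zero.2 hrt)
  exact pos_of_mul_pos_right ((by positivity : 0 < |r.1 - t| ^ finrank ℝ F * _).trans_le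
    (abs_pow_mul_sliceVolume_le hKc hconv hr hseg)) (by positivity)

lemma sub_pow_mul_sliceVolume_zero_mul_le (hconv : Convex ℝ K) (hKc : IsCompact K) (hp : p ∈ K)
    (hM : 0 < p.1) {t : ℝ} (htp : t ≤ p.1) :
    (p.1 - t) ^ finrank ℝ F * sliceVolume μ K 0 * t ≤
      p.1 ^ finrank ℝ F * (sliceVolume μ K t * t) := by
  rw [← mul_assoc]
  rcases le_total 0 t with ht | ht
  · have hcone := abs_pow_mul_sliceVolume_le (μ := μ) hKc hconv hp (s := 0) (t := t)
      (by rw [segment_eq_Icc hM.le]; exact ⟨ht, htp⟩)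
    rw [abs_of_nonneg (sub_nonneg.2 htp), sub_zero, abs_of_pos hM] at hcone
    exact mul_le_mul_of_nonneg_right hcone ht
  · have hcone := abs_pow_mul_sliceVolume_le (μ := μ) hKc hconv hp (s := t) (t := 0)
      (by rw [segment_eq_Icc htp]; exact ⟨ht, hM.le⟩)
    rw [abs_of_nonneg (sub_nonneg.2 htp), sub_zero, abs_of_pos hM] at hcone
    exact mul_le_mul_of_nonpos_right hcone ht

theorem Convex.fst_le_mul_neg_fst (hconv : Convex ℝ K) (hKc : IsCompact K)
    (hvol : (volume : Measure ℝ).prod μ K ≠ 0)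
    (hcent : ∫ x in K, x.1 ∂(volume.prod μ) = 0) (hp : p ∈ K) (hq : q ∈ K)
    (hpmax : IsMaxOn Prod.fst K p) (hqmin : IsMinOn Prod.fst K q) :
    p.1 ≤ (finrank ℝ F + 1) * -q.1 := by
  set d := finrank ℝ F
  set A := sliceVolume μ K
  have hM : 0 < p.1 := fst_pos_of_isMaxOn hKc hvol hcent hpmax
  have hm : q.1 < 0 := fst_neg_of_isMinOn hKc hvol hcent hqmin
  have hA0 : 0 < A 0 := sliceVolume_pos_of_mem_Ioo hconv hKc hvol hp hq hpmax hqmin ⟨hm, hM⟩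
  have hint : A 0 * ∫ t in q.1..p.1, (p.1 - t) ^ d * t ≤ 0 :=
    calc A 0 * ∫ t in q.1..p.1, (p.1 - t) ^ d * t
        = ∫ t in Icc q.1 p.1, (p.1 - t) ^ d * A 0 * t := by
          rw [← intervalIntegral.integral_const_mul, intervalIntegral.integral_of_le
            (hm.trans hM).le, integral_Icc_eq_integral_Ioc]
          congr 1 with t
          ring
      _ ≤ ∫ t in Icc q.1 p.1, p.1 ^ d * (A t * t) :=
          setIntegral_mono_on (Continuous.integrableOn_Icc (by fun_prop))
            ((integrable_sliceVolume_mul hKc).integrableOn.const_mul _) measurableSet_Icc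
            fun t ht => sub_pow_mul_sliceVolume_zero_mul_le hconv hKc hp hM ht.2
      _ = p.1 ^ d * ∫ t, A t * t := by
          rw [integral_const_mul, setIntegral_eq_integral_of_forall_compl_eq_zero
            fun t ht => by simp [sliceVolume_eq_zero_of_notMem_Icc hpmax hqmin ht, A]]
      _ = 0 := by rw [integral_sliceVolume_mul hKc, hcent, mul_zero]
  rw [intervalIntegral_sub_pow_mul] at hint
  have hW : 0 < (p.1 - q.1) ^ (d + 1) := pow_pos (by linarith) _
  by_contra! h
  have : 0 < A 0 * ((p.1 - q.1) ^ (d + 1) * (p.1 + (d + 1) * q.1) / ((d + 1) * (d + 2))) := by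
    have : 0 < p.1 + (d + 1) * q.1 := by linarith
    positivity
  linarith

end Cone

section Euclidean

variable {n : ℕ}

lemma exists_measurableEquiv_fst_eq_inner {u : EuclideanSpace ℝ (Fin (n + 1))}
    (hu : ‖u‖ = 1) :
    ∃ Ψ : EuclideanSpace ℝ (Fin (n + 1)) ≃ᵐ ℝ × (Fin n → ℝ),
      MeasurePreserving Ψ ∧ IsLinearMap ℝ Ψ ∧ ∀ x, (Ψ x).1 = inner ℝ u x := by
  set e := EuclideanSpace.single (0 : Fin (n + 1)) (1 : ℝ)
  set R := (ℝ ∙ (u - e))ᗮ.reflection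
  have hRu : R u = e := Submodule.reflection_sub (by simp [hu, e])
  refine ⟨R.toHomeomorph.toMeasurableEquiv.trans ((MeasurableEquiv.toLp 2 _).symm.trans
    (MeasurableEquiv.piFinSuccAbove (fun _ => ℝ) 0)), ?_, ?_, fun x => ?_⟩
  · exact ((volume_preserving_piFinSuccAbove (fun _ : Fin (n + 1) => ℝ) 0).comp
      (EuclideanSpace.volume_preserving_symm_measurableEquiv_toLp (Fin (n + 1)))).comp
      R.measurePreserving
  · constructor <;> intros <;> ext <;> simp [Fin.tail]
  · calc _ = inner ℝ e (R x) := by simp [e, EuclideanSpace.inner_single_left]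
      _ = inner ℝ u x := by rw [← hRu, LinearIsometryEquiv.inner_map_map]

lemma Convex.inner_le_mul_neg_inner {L : Set (EuclideanSpace ℝ (Fin (n + 1)))}
    (hLconv : Convex ℝ L) (hLc : IsCompact L) (hLint : (interior L).Nonempty)
    (hcent : ∫ x in L, x = 0) {u : EuclideanSpace ℝ (Fin (n + 1))} (hu : ‖u‖ = 1)
    {p q : EuclideanSpace ℝ (Fin (n + 1))} (hp : p ∈ L) (hq : q ∈ L)
    (hpmax : IsMaxOn (inner ℝ u) L p) (hqmin : IsMinOn (inner ℝ u) L q) :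
    inner ℝ u p ≤ (n + 1) * -inner ℝ u q := by
  obtain ⟨Ψ, hΨ, hlin, hfst⟩ := exists_measurableEquiv_fst_eq_inner hu
  have hvol : volume (Ψ '' L) ≠ 0 := by
    rw [← hΨ.map_eq, Ψ.map_apply, Ψ.preimage_image]
    exact ((isOpen_interior.measure_pos volume hLint).trans_le
      (measure_mono interior_subset)).ne'
  have hcentK : ∫ y in Ψ '' L, y.1 = 0 := by
    rw [hΨ.setIntegral_image_emb Ψ.measurableEmbedding]
    simp only [hfst]
    exact (integral_inner (f := fun x => x) (continuousOn_id.integrableOn_compact hLc) u).trans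
      (by rw [hcent, inner_zero_right])
  have := Convex.fst_le_mul_neg_fst (μ := volume) (hLconv.is_linear_image hlin)
    (hLc.image (hlin.mk' Ψ).continuous_of_finiteDimensional) hvol hcentK
    (mem_image_of_mem Ψ hp) (mem_image_of_mem Ψ hq)
    (by rintro _ ⟨x, hx, rfl⟩; simpa [hfst] using hpmax hx)
    (by rintro _ ⟨x, hx, rfl⟩; simpa [hfst] using hqmin hx)
  simpa [hfst] using this

lemma Convex.neg_le_mul_of_isMaxOn_of_isMinOn {L : Set (EuclideanSpace ℝ (Fin (n + 1)))}
    (hLconv : Convex ℝ L) (hLc : IsCompact L) (hLint : (interior L).Nonempty)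
    (hcent : ∫ x in L, x = 0) (l : StrongDual ℝ (EuclideanSpace ℝ (Fin (n + 1))))
    {p q : EuclideanSpace ℝ (Fin (n + 1))} (hp : p ∈ L) (hq : q ∈ L)
    (hpmax : IsMaxOn l L p) (hqmin : IsMinOn l L q) :
    -l q ≤ (n + 1) * l p := by
  set v := (InnerProductSpace.toDual ℝ _).symm l
  have hl : ∀ x, l x = inner ℝ v x := fun x => InnerProductSpace.toDual_symm_apply.symm
  rcases eq_or_ne v 0 with hv | hv
  · simp [hl, hv]
  have hc : 0 < ‖v‖⁻¹ := inv_pos.2 (norm_pos_iff.2 hv)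
  have hu : ‖-(‖v‖⁻¹ • v)‖ = 1 := by simp [norm_smul, hv]
  have hinner : ∀ x, inner ℝ (-(‖v‖⁻¹ • v)) x = -(‖v‖⁻¹ * l x) := by
    simp [hl, real_inner_smul_left]
  have := hLconv.inner_le_mul_neg_inner hLc hLint hcent hu hq hp
    (fun x hx => by simpa only [mem_ofPred_eq, hinner, neg_le_neg_iff] using
      mul_le_mul_of_nonneg_left (hqmin hx) hc.le)
    (fun x hx => by simpa only [mem_ofPred_eq, hinner, neg_le_neg_iff] using
      mul_le_mul_of_nonneg_left (hpmax hx) hc.le)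
  rw [hinner, hinner] at this
  exact le_of_mul_le_mul_left (by linear_combination this) hc

lemma Convex.neg_subset_smul_of_integral_eq_zero {L : Set (EuclideanSpace ℝ (Fin (n + 1)))}
    (hLconv : Convex ℝ L) (hLc : IsCompact L) (hLint : (interior L).Nonempty)
    (hcent : ∫ x in L, x = 0) :
    -L ⊆ ((n + 1 : ℕ) : ℝ) • L := by
  intro z hz
  have hLne : L.Nonempty := hLint.mono interior_subset
  rw [mem_smul_set_iff_inv_smul_mem₀ (by positivity),
    ← iInter_halfSpaces_eq hLconv hLc.isClosed, mem_iInter]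
  intro l
  obtain ⟨p, hp, hpmax⟩ := hLc.exists_isMaxOn hLne l.continuous.continuousOn
  obtain ⟨q, hq, hqmin⟩ := hLc.exists_isMinOn hLne l.continuous.continuousOn
  refine ⟨p, hp, ?_⟩
  have hqz : l q ≤ -l z := by simpa using hqmin (mem_neg.1 hz)
  have := hLconv.neg_le_mul_of_isMaxOn_of_isMinOn hLc hLint hcent l hp hq hpmax hqmin
  rw [map_smul, smul_eq_mul, inv_mul_le_iff₀ (by positivity)]
  push_cast
  linarith

end Euclidean

lemma Convex.zero_mem_interior_of_neg_subset_smul {E : Type*} [AddCommGroup E] [Module ℝ E]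
    [TopologicalSpace E] [IsTopologicalAddGroup E] [ContinuousConstSMul ℝ E] {L : Set E}
    (hLconv : Convex ℝ L) (hLint : (interior L).Nonempty) {c : ℝ} (hc : 0 ≤ c)
    (hneg : -L ⊆ c • L) : (0 : E) ∈ interior L := by
  obtain ⟨x, hx⟩ := hLint
  obtain ⟨y, hy, hxy⟩ := hneg (neg_mem_neg.2 (interior_subset hx))
  replace hxy : c • y = -x := hxy
  have hc1 : 0 < 1 + c := by linarith
  convert hLconv.combo_interior_self_mem_interior hx hy (inv_pos.2 hc1)
    (div_nonneg hc hc1.le) (by field_simp) using 1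
  rw [div_eq_inv_mul, mul_smul, ← smul_add, hxy, add_neg_cancel, smul_zero]

lemma gauge_le_mul_gauge_neg {E : Type*} [AddCommGroup E] [Module ℝ E] [TopologicalSpace E]
    [IsTopologicalAddGroup E] [ContinuousSMul ℝ E] {s : Set E} (hs : s ∈ nhds 0) {c : ℝ}
    (hc : 0 < c) (hneg : -s ⊆ c • s) (x : E) : gauge s x ≤ c * gauge s (-x) := by
  have := gauge_mono (absorbent_nhds_zero (neg_mem_nhds_zero E hs)) hneg x
  rwa [gauge_smul_left_of_nonneg hc.le, gauge_neg_set_eq_gauge_neg, Pi.smul_apply, smul_eq_mul,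
    inv_mul_le_iff₀ hc] at this

lemma gauge_div_gauge_neg_mem_Icc {E : Type*} [AddCommGroup E] [Module ℝ E] [TopologicalSpace E]
    [IsTopologicalAddGroup E] [ContinuousSMul ℝ E] [T1Space E] {s : Set E} (hs : s ∈ nhds 0)
    (hsb : Bornology.IsVonNBounded ℝ s) {c : ℝ} (hc : 0 < c) (hneg : -s ⊆ c • s) {x : E}
    (hx : x ≠ 0) : gauge s x / gauge s (-x) ∈ Icc (1 / c) c := by
  have hpos : 0 < gauge s (-x) := (gauge_pos (absorbent_nhds_zero hs) hsb).2 (neg_ne_zero.2 hx)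
  have h₁ := gauge_le_mul_gauge_neg hs hc hneg x
  have h₂ := gauge_le_mul_gauge_neg hs hc hneg (-x)
  rw [neg_neg] at h₂
  constructor
  · rw [le_div_iff₀ hpos, div_mul_eq_mul_div, one_mul, div_le_iff₀ hc, mul_comm]
    exact h₂
  · rw [div_le_iff₀ hpos]
    exact h₁

/-- If `L` is a convex body in `ℝᵏ` with centroid at the origin, then `-L ⊆ k·L`;
equivalently, for every unit vector `θ`, `1/k ≤ ‖θ‖_L/‖-θ‖_L ≤ k`,
where `‖·‖_L` is the Minkowski functional (gauge) of `L`. -/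
theorem neg_subset_smul (k : ℕ) (hk : 1 ≤ k) (L : Set (EuclideanSpace ℝ (Fin k)))
    (hLc : IsCompact L) (hLconv : Convex ℝ L) (hLint : (interior L).Nonempty)
    (hcent : ∫ x in L, x = 0) :
    (-L ⊆ (k : ℝ) • L) ∧
      ∀ θ : EuclideanSpace ℝ (Fin k), ‖θ‖ = 1 →
        1 / (k : ℝ) ≤ gauge L θ / gauge L (-θ) ∧ gauge L θ / gauge L (-θ) ≤ k := by
  obtain ⟨n, rfl⟩ : ∃ n, k = n + 1 := ⟨k - 1, by omega⟩
  have hneg := hLconv.neg_subset_smul_of_integral_eq_zero hLc hLint hcent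
  have h0 := hLconv.zero_mem_interior_of_neg_subset_smul hLint (by positivity) hneg
  refine ⟨hneg, fun θ hθ => gauge_div_gauge_neg_mem_Icc (mem_interior_iff_mem_nhds.1 h0)
    (NormedSpace.isVonNBounded_iff ℝ |>.2 hLc.isBounded) (by positivity) hneg ?_⟩
  rintro rfl
  simp at hθ
end

section
/- There exist universal constants c₁, c₂ > 0 such that for all real x, y ≥ 1: c₁·x/(x+y) ≤ B(x,y)^{1/x} ≤ c₂·x/(x+y), where B is the Beta function. -/
/-!
Put `a = x / (x + y)`. For the lower bound, restrict the integral to `[0, a]`, where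
`(1 - t)^(y-1) ≥ (1 - a)^(y-1) ≥ e^{-x}`; this gives `B(x,y) ≥ a^x / x · e^{-x} ≥ (a / e²)^x`.
For the upper bound, factor the integrand as `(t (1-t)^r)^(x-1) · (1-t)^(r-1)` with `r = y / x`;
weighted AM-GM bounds `t (1-t)^r` by `1 / (1 + r) = a`, so `B(x,y) ≤ a^(x-1) · x / y`, which is at
most `(2a)^x` once `y ≥ x`. When `y ≤ x`, simply `B(x,y) ≤ 1 ≤ (2a)^x`.
-/

noncomputable def Beta (x y : ℝ) : ℝ := ∫ t in (0:ℝ)..1, t ^ (x - 1) * (1 - t) ^ (y - 1)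

open Real MeasureTheory

lemma mul_one_sub_rpow_le {t r : ℝ} (ht₀ : 0 ≤ t) (ht₁ : t ≤ 1) (hr : 0 < r) :
    t * (1 - t) ^ r ≤ (1 + r)⁻¹ := by
  set w := (1 + r)⁻¹ with hw_def
  have hw : 0 < w := by positivity
  have hrw : 0 < r * w := by positivity
  have hsum : w + r * w = 1 := by rw [hw_def]; field_simp
  have amgm : (t / w) ^ w * ((1 - t) / (r * w)) ^ (r * w) ≤ 1 := by
    have := geom_mean_le_arith_mean2_weighted hw.le hrw.le (div_nonneg ht₀ hw.le)
      (div_nonneg (sub_nonneg.2 ht₁) hrw.le) hsum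
    rwa [mul_div_cancel₀ _ hw.ne', mul_div_cancel₀ _ hrw.ne', add_sub_cancel] at this
  have hpow : t / w * ((1 - t) / (r * w)) ^ r ≤ 1 := by
    have := rpow_le_one (by positivity) amgm (by positivity : (0:ℝ) ≤ 1 + r)
    rwa [mul_rpow (by positivity) (by positivity), ← rpow_mul (by positivity),
      ← rpow_mul (by positivity), hw_def, inv_mul_cancel₀ (by positivity), rpow_one,
      mul_assoc, inv_mul_cancel₀ (by positivity), mul_one] at this
  have hmono : (1 - t) ^ r ≤ ((1 - t) / (r * w)) ^ r :=
    rpow_le_rpow (by linarith) (le_div_self (by linarith) hrw (by linarith)) hr.le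
  calc t * (1 - t) ^ r = w * (t / w * (1 - t) ^ r) := by field_simp
    _ ≤ w * (t / w * ((1 - t) / (r * w)) ^ r) := by gcongr
    _ ≤ w := mul_le_of_le_one_right hw.le hpow

lemma exp_neg_le_div_add_rpow {x y : ℝ} (hx : 0 ≤ x) (hy : 0 < y) :
    exp (-x) ≤ (y / (x + y)) ^ y := by
  have hle : exp (-(x / y)) ≤ y / (x + y) := by
    rw [exp_neg, ← inv_div (x + y)]
    apply inv_anti₀ (by positivity)
    calc (x + y) / y = x / y + 1 := by field_simp
      _ ≤ exp (x / y) := add_one_le_exp _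
  calc exp (-x) = exp (-(x / y)) ^ y := by rw [← exp_mul]; congr 1; field_simp
    _ ≤ (y / (x + y)) ^ y := by gcongr

lemma intervalIntegrable_one_sub_rpow {c : ℝ} (hc : -1 < c) :
    IntervalIntegrable (fun t : ℝ => (1 - t) ^ c) volume 0 1 := by
  simpa using
    ((intervalIntegral.intervalIntegrable_rpow' hc (a := 0) (b := 1)).comp_sub_left 1).symm

lemma integral_one_sub_rpow {c : ℝ} (hc : -1 < c) :
    ∫ t in (0:ℝ)..1, (1 - t) ^ c = (c + 1)⁻¹ := by
  rw [intervalIntegral.integral_comp_sub_left (fun t : ℝ => t ^ c), integral_rpow (Or.inl hc)]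
  simp [zero_rpow (by linarith : c + 1 ≠ 0)]

lemma continuous_Beta_integrand {x y : ℝ} (hx : 1 ≤ x) (hy : 1 ≤ y) :
    Continuous fun t : ℝ => t ^ (x - 1) * (1 - t) ^ (y - 1) :=
  (continuous_rpow_const (by linarith)).mul
    ((continuous_rpow_const (by linarith)).comp (continuous_const.sub continuous_id))

lemma Beta_nonneg (x y : ℝ) : 0 ≤ Beta x y :=
  intervalIntegral.integral_nonneg zero_le_one fun _ ht =>
    mul_nonneg (rpow_nonneg ht.1 _) (rpow_nonneg (sub_nonneg.2 ht.2) _)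

lemma Beta_le_one {x y : ℝ} (hx : 1 ≤ x) (hy : 1 ≤ y) : Beta x y ≤ 1 := by
  calc Beta x y ≤ ∫ _ in (0:ℝ)..1, (1:ℝ) :=
        intervalIntegral.integral_mono_on zero_le_one
          ((continuous_Beta_integrand hx hy).intervalIntegrable 0 1) intervalIntegrable_const
          fun t ht => mul_le_one₀ (rpow_le_one ht.1 ht.2 (by linarith))
            (rpow_nonneg (sub_nonneg.2 ht.2) _)
            (rpow_le_one (sub_nonneg.2 ht.2) (by linarith [ht.1]) (by linarith))
    _ = 1 := by simp

lemma Beta_le_rpow_mul_div {x y : ℝ} (hx : 1 ≤ x) (hy : 1 ≤ y) :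
    Beta x y ≤ (x / (x + y)) ^ (x - 1) * (x / y) := by
  have hx₀ : 0 < x := by linarith
  set r := y / x with hr_def
  have hr : 0 < r := by positivity
  have hinv : (1 + r)⁻¹ = x / (x + y) := by rw [hr_def]; field_simp
  have hpt : ∀ t ∈ Set.Ioo (0:ℝ) 1,
      t ^ (x - 1) * (1 - t) ^ (y - 1) ≤ (x / (x + y)) ^ (x - 1) * (1 - t) ^ (r - 1) := by
    intro t ⟨ht₀, ht₁⟩
    have h1t : 0 < 1 - t := by linarith
    have hsplit : t ^ (x - 1) * (1 - t) ^ (y - 1) =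
        (t * (1 - t) ^ r) ^ (x - 1) * (1 - t) ^ (r - 1) := by
      rw [mul_rpow ht₀.le (by positivity), ← rpow_mul h1t.le, mul_assoc, ← rpow_add h1t, hr_def]
      congr 2; field_simp; ring
    rw [hsplit, ← hinv]
    gcongr
    exact mul_one_sub_rpow_le ht₀.le ht₁.le hr
  calc Beta x y ≤ ∫ t in (0:ℝ)..1, (x / (x + y)) ^ (x - 1) * (1 - t) ^ (r - 1) :=
        intervalIntegral.integral_mono_on_of_le_Ioo zero_le_one
          ((continuous_Beta_integrand hx hy).intervalIntegrable 0 1)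
          ((intervalIntegrable_one_sub_rpow (by linarith)).const_mul _) hpt
    _ = (x / (x + y)) ^ (x - 1) * (x / y) := by
        rw [intervalIntegral.integral_const_mul, integral_one_sub_rpow (by linarith),
          sub_add_cancel, hr_def, inv_div]

lemma Beta_le_two_mul_div_rpow {x y : ℝ} (hx : 1 ≤ x) (hy : 1 ≤ y) :
    Beta x y ≤ (2 * x / (x + y)) ^ x := by
  have hx₀ : 0 < x := by linarith
  rcases le_total x y with hxy | hyx
  · calc Beta x y ≤ (x / (x + y)) ^ (x - 1) * (x / y) := Beta_le_rpow_mul_div hx hy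
      _ = (x / (x + y)) ^ x * ((x + y) / y) := by
          rw [rpow_sub_one (by positivity)]; field_simp
      _ ≤ (x / (x + y)) ^ x * 2 ^ x := by
          gcongr
          calc (x + y) / y ≤ 2 := by rw [div_le_iff₀ (by linarith)]; linarith
            _ ≤ 2 ^ x := by simpa using rpow_le_rpow_of_exponent_le one_le_two hx
      _ = (2 * x / (x + y)) ^ x := by rw [← mul_rpow (by positivity) zero_le_two]; ring_nf
  · calc Beta x y ≤ 1 := Beta_le_one hx hy
      _ ≤ (2 * x / (x + y)) ^ x :=
          one_le_rpow (by rw [le_div_iff₀ (by linarith)]; linarith) hx₀.le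

lemma rpow_div_mul_le_Beta {x y a : ℝ} (hx : 1 ≤ x) (hy : 1 ≤ y) (ha₀ : 0 ≤ a) (ha₁ : a ≤ 1) :
    a ^ x / x * (1 - a) ^ (y - 1) ≤ Beta x y := by
  have hcont := continuous_Beta_integrand hx hy
  calc a ^ x / x * (1 - a) ^ (y - 1) = ∫ t in (0:ℝ)..a, t ^ (x - 1) * (1 - a) ^ (y - 1) := by
        rw [intervalIntegral.integral_mul_const, integral_rpow (Or.inl (by linarith)),
          sub_add_cancel, zero_rpow (by linarith), sub_zero]
    _ ≤ ∫ t in (0:ℝ)..a, t ^ (x - 1) * (1 - t) ^ (y - 1) :=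
        intervalIntegral.integral_mono_on ha₀
          (((continuous_rpow_const (by linarith)).mul continuous_const).intervalIntegrable 0 a)
          (hcont.intervalIntegrable 0 a) fun t ht => by
            gcongr
            · exact rpow_nonneg ht.1 _
            · linarith [ht.2]
    _ ≤ Beta x y := by
        refine intervalIntegral.integral_mono_interval le_rfl ha₀ ha₁ ?_
          (hcont.intervalIntegrable 0 1)
        filter_upwards [ae_restrict_mem measurableSet_Ioc] with t ht
        exact mul_nonneg (rpow_nonneg ht.1.le _) (rpow_nonneg (sub_nonneg.2 ht.2) _)

lemma exp_neg_two_mul_div_rpow_le_Beta {x y : ℝ} (hx : 1 ≤ x) (hy : 1 ≤ y) :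
    (exp (-2) * x / (x + y)) ^ x ≤ Beta x y := by
  have hx₀ : 0 < x := by linarith
  have hy₀ : 0 < y := by linarith
  set a := x / (x + y) with ha
  have h1a : 1 - a = y / (x + y) := by rw [ha]; field_simp; ring
  have hexp_inv : exp (-x) ≤ x⁻¹ := by
    rw [exp_neg]; exact inv_anti₀ hx₀ (by linarith [add_one_le_exp x])
  have hexp_pow : exp (-x) ≤ (1 - a) ^ (y - 1) := by
    rw [h1a]
    calc exp (-x) ≤ (y / (x + y)) ^ y := exp_neg_le_div_add_rpow hx₀.le hy₀
      _ ≤ (y / (x + y)) ^ (y - 1) :=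
          rpow_le_rpow_of_exponent_ge (by positivity)
            (by rw [div_le_one (by positivity)]; linarith) (by linarith)
  calc (exp (-2) * x / (x + y)) ^ x = a ^ x * exp (-x) * exp (-x) := by
        rw [mul_div_assoc, mul_rpow (exp_pos _).le (by positivity), ← exp_mul, ← ha,
          mul_assoc, ← exp_add]
        ring_nf
    _ ≤ a ^ x * x⁻¹ * (1 - a) ^ (y - 1) := by gcongr
    _ = a ^ x / x * (1 - a) ^ (y - 1) := by ring
    _ ≤ Beta x y := rpow_div_mul_le_Beta hx hy (by positivity)
        (by rw [ha, div_le_one (by positivity)]; linarith)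

/-- There are universal constants `c₁, c₂ > 0` with
`c₁ x/(x+y) ≤ B(x,y)^{1/x} ≤ c₂ x/(x+y)` for all `x, y ≥ 1`. -/
theorem beta_rpow_bounds :
    ∃ c₁ c₂ : ℝ, 0 < c₁ ∧ 0 < c₂ ∧ ∀ x y : ℝ, 1 ≤ x → 1 ≤ y →
      c₁ * x / (x + y) ≤ Beta x y ^ (1 / x) ∧ Beta x y ^ (1 / x) ≤ c₂ * x / (x + y) := by
  refine ⟨exp (-2), 2, exp_pos _, two_pos, fun x y hx hy => ⟨?_, ?_⟩⟩
  · rw [one_div, le_rpow_inv_iff_of_pos (by positivity) (Beta_nonneg x y) (by positivity)]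
    exact exp_neg_two_mul_div_rpow_le_Beta hx hy
  · rw [one_div, rpow_inv_le_iff_of_pos (Beta_nonneg x y) (by positivity) (by positivity)]
    exact Beta_le_two_mul_div_rpow hx hy
end

section
/- Let Δₙ be a regular simplex in ℝⁿ with vertices v₁,…,v_{n+1} and centroid at 0. For 1 ≤ l ≤ n−1, let E_l = span(v₁,…,v_l) and f_{l+1} = (∑_{k=l+1}^{n+1} v_k)/(n+1−l) = −(∑_{k=1}^{l} v_k)/(n+1−l). Then the l-dimensional volume ratio |Δₙ ∩ E_l ∩ {x : ⟨f_{l+1},x⟩ ≥ 0}| / |Δₙ ∩ E_l| = (l/(n+1))^l, and consequently |Δₙ ∩ E_l ∩ f_{l+1}⁻| / |Δₙ ∩ E_l ∩ f_{l+1}⁺| = ((n+1)/l)^l − 1. -/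
/-!
Write `a < 0` for the common value of `⟪v i, v j⟫`, `i ≠ j`; centring forces `‖v i‖² = -n a`, and
reading off barycentric coordinates shows `Δ = {x | ∀ i, a ≤ ⟪v i, x⟫}`. On `E_l` the constraints
with `i > l` all coincide with `a ≤ ⟪f, x⟫`, since `⟪v i, ·⟫` and `⟪f, ·⟫` agree on the generators
of `E_l`. The homothety with centre `f` and ratio `r = l / (n + 1)` multiplies the slacks
`⟪v i, x⟫ - a` (`i ≤ l`) by `r` and satisfies `⟪f, h x⟫ = r (⟪f, x⟫ - a)`, so it maps `Δ ∩ E_l` onto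
`Δ ∩ E_l ∩ f⁺`, which therefore has `r ^ l` times its measure. On `E_l` the `l`-dimensional
Hausdorff measure is a Haar measure, so `Δ ∩ E_l` has finite positive measure and the hyperplane
`f^⊥ ∩ E_l` is null; this gives the second ratio.
-/

open MeasureTheory Set Finset Module
open scoped RealInnerProductSpace NNReal ENNReal

variable {V : Type*} [NormedAddCommGroup V] [InnerProductSpace ℝ V] {ι : Type*} {v : ι → V}
  {a : ℝ}

section Fintype

variable [Fintype ι]

theorem AffineIndependent.eq_of_sum_smul_eq_zero (haff : AffineIndependent ℝ v)
    (hcent : ∑ i, v i = 0) {w : ι → ℝ} (hw : ∑ i, w i • v i = 0) (i j : ι) : w i = w j := by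
  set μ := (∑ i, w i) / Fintype.card ι
  have hcard : (Fintype.card ι : ℝ) ≠ 0 := by
    exact_mod_cast (Fintype.card_pos_iff.2 ⟨i⟩).ne'
  have hsum : ∑ i, (w i - μ) = 0 := by
    rw [Finset.sum_sub_distrib, Finset.sum_const, Finset.card_univ, nsmul_eq_mul]
    rw [mul_div_cancel₀ _ hcard, sub_self]
  have hcomb : ∑ i, (w i - μ) • v i = 0 := by
    simp only [sub_smul, Finset.sum_sub_distrib, hw, ← Finset.smul_sum, hcent, smul_zero, sub_zero]
  have hzero := affineIndependent_iff.1 haff Finset.univ _ hsum hcomb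
  linarith [hzero i (Finset.mem_univ i), hzero j (Finset.mem_univ j)]

theorem AffineIndependent.linearIndepOn_of_sum_eq_zero (haff : AffineIndependent ℝ v)
    (hcent : ∑ i, v i = 0) {S : Finset ι} (hS : S ≠ Finset.univ) :
    LinearIndepOn ℝ v (S : Set ι) := by
  classical
  obtain ⟨j, hj⟩ : ∃ j, j ∉ S := by simpa [Finset.eq_univ_iff_forall] using hS
  refine linearIndepOn_finset_iff.2 fun w hw i hi => ?_
  have hext : ∑ k, (if k ∈ S then w k else 0) • v k = 0 := by
    simpa [ite_smul, Finset.sum_ite_mem] using hw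
  simpa [hi, hj] using haff.eq_of_sum_smul_eq_zero hcent hext i j

theorem AffineIndependent.finrank_span_image_of_sum_eq_zero (haff : AffineIndependent ℝ v)
    (hcent : ∑ i, v i = 0) {S : Finset ι} (hS : S ≠ Finset.univ) :
    finrank ℝ (Submodule.span ℝ (v '' S)) = #S := by
  rw [Set.image_eq_range, finrank_span_eq_card (haff.linearIndepOn_of_sum_eq_zero hcent hS)]
  simp

theorem norm_sq_eq_of_dist_eq_of_sum_eq_zero (hcent : ∑ i, v i = 0) {d : ℝ}
    (hd : ∀ i j, i ≠ j → dist (v i) (v j) = d) (i j : ι) : ‖v i‖ ^ 2 = ‖v j‖ ^ 2 := by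
  classical
  have hrow : ∀ i, (Fintype.card ι : ℝ) * ‖v i‖ ^ 2 + ∑ k, ‖v k‖ ^ 2
      = (Fintype.card ι - 1) * d ^ 2 := by
    intro i
    have hdist : ∀ k, ‖v i - v k‖ ^ 2 = d ^ 2 - if i = k then d ^ 2 else 0 := by
      intro k
      split_ifs with hik
      · simp [hik]
      · rw [← dist_eq_norm, hd i k hik, sub_zero]
    have hexpand : ∀ k, ‖v i - v k‖ ^ 2 = ‖v i‖ ^ 2 - 2 * ⟪v i, v k⟫ + ‖v k‖ ^ 2 :=
      fun k => norm_sub_sq_real _ _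
    have hsum := Finset.sum_congr rfl fun k (_ : k ∈ Finset.univ) =>
      (hdist k).symm.trans (hexpand k)
    rw [Finset.sum_sub_distrib, Finset.sum_ite_eq, Finset.sum_add_distrib, Finset.sum_sub_distrib,
      ← Finset.mul_sum, ← inner_sum, hcent, inner_zero_right] at hsum
    simp only [Finset.sum_const, Finset.card_univ, nsmul_eq_mul, Finset.mem_univ, if_true] at hsum
    linarith
  have hcard : (0 : ℝ) < Fintype.card ι := by
    exact_mod_cast Fintype.card_pos_iff.2 ⟨i⟩
  have := hrow i
  have := hrow j
  exact mul_left_cancel₀ hcard.ne' (by linarith)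

end Fintype

section Gram

variable [DecidableEq ι]

theorem inner_sum_smul_of_inner_eq_ite {b : ℝ}
    (hgram : ∀ i j, ⟪v i, v j⟫ = if i = j then b else a) (s : Finset ι) (w : ι → ℝ) (j : ι) :
    ⟪∑ i ∈ s, w i • v i, v j⟫ = a * ∑ i ∈ s, w i + (b - a) * if j ∈ s then w j else 0 := by
  have hterm : ∀ i, ⟪w i • v i, v j⟫ = a * w i + if i = j then (b - a) * w i else 0 := by
    intro i
    rw [real_inner_smul_left, hgram]
    split_ifs <;> ring
  rw [sum_inner, Finset.sum_congr rfl fun i _ => hterm i, Finset.sum_add_distrib,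
    Finset.sum_ite_eq', ← Finset.mul_sum, mul_ite, mul_zero]

variable [Fintype ι]

theorem exists_inner_eq_ite_of_dist_eq [Nontrivial ι] (hv : Function.Injective v)
    (hcent : ∑ i, v i = 0) (hreg : ∃ d : ℝ, ∀ i j, i ≠ j → dist (v i) (v j) = d) :
    ∃ a < 0, ∀ i j, ⟪v i, v j⟫ = if i = j then (1 - (Fintype.card ι : ℝ)) * a else a := by
  obtain ⟨d, hd⟩ := hreg
  obtain ⟨i₀, i₁, hi⟩ := exists_pair_ne ι
  have hnorm := norm_sq_eq_of_dist_eq_of_sum_eq_zero hcent hd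
  set s := ‖v i₀‖ ^ 2
  have hgram : ∀ i j, ⟪v i, v j⟫ = if i = j then s else s - d ^ 2 / 2 := by
    intro i j
    split_ifs with hij
    · rw [hij, real_inner_self_eq_norm_sq, hnorm]
    · have := norm_sub_sq_real (v i) (v j)
      rw [← dist_eq_norm, hd i j hij, hnorm i i₀, hnorm j i₀] at this
      linarith
  have hrel : s = (1 - Fintype.card ι) * (s - d ^ 2 / 2) := by
    have := inner_sum_smul_of_inner_eq_ite hgram Finset.univ (fun _ => 1) i₀
    simp only [one_smul, hcent, inner_zero_left, Finset.sum_const, Finset.card_univ,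
      nsmul_eq_mul, mul_one, Finset.mem_univ, if_true] at this
    linarith
  have hs : 0 < s := by
    refine lt_of_le_of_ne (sq_nonneg _) fun h => hi (hv ?_)
    have hzero : ∀ i, v i = 0 := fun i => by
      have : ‖v i‖ ^ 2 = 0 := by rw [hnorm i i₀]; exact h.symm
      simpa using this
    rw [hzero i₀, hzero i₁]
  have hcard : (2 : ℝ) ≤ Fintype.card ι := by exact_mod_cast Fintype.one_lt_card
  refine ⟨s - d ^ 2 / 2, ?_, fun i j => ?_⟩
  · nlinarith
  · rw [hgram, ← hrel]

theorem convexHull_eq_setOf_le_inner (haff : AffineIndependent ℝ v)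
    (htot : affineSpan ℝ (range v) = ⊤) (ha : a < 0)
    (hgram : ∀ i j, ⟪v i, v j⟫ = if i = j then (1 - (Fintype.card ι : ℝ)) * a else a) :
    convexHull ℝ (range v) = {x | ∀ i, a ≤ ⟪v i, x⟫} := by
  let b : AffineBasis ι ℝ V := ⟨v, haff, htot⟩
  change convexHull ℝ (range b) = _
  rw [b.convexHull_eq_nonneg_coord]
  ext x
  have hinner : ∀ i, ⟪v i, x⟫ = a - Fintype.card ι * a * b.coord i x := by
    intro i
    calc ⟪v i, x⟫ = ⟪∑ j, b.coord j x • v j, v i⟫ := by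
          rw [real_inner_comm]
          congr 1
          exact (b.linear_combination_coord_eq_self x).symm
      _ = a - Fintype.card ι * a * b.coord i x := by
          rw [inner_sum_smul_of_inner_eq_ite hgram, b.sum_coord_apply_eq_one]
          simp only [Finset.mem_univ, if_true]
          ring
  simp only [mem_ofPred_eq, hinner]
  refine forall_congr' fun i => ?_
  have hka : Fintype.card ι * a < 0 :=
    mul_neg_of_pos_of_neg (by exact_mod_cast Fintype.card_pos_iff.2 ⟨i⟩) ha
  constructor <;> intro h <;> nlinarith

end Gram

section ComplFace

variable [Fintype ι]

-- When `∑ i, v i = 0` this is the centroid of the face spanned by the `v i` with `i ∉ S`.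
variable (v) in
noncomputable def complFaceCentroid (S : Finset ι) : V :=
  (-((Fintype.card ι : ℝ) - #S)⁻¹) • ∑ i ∈ S, v i

variable {S : Finset ι}

theorem complFaceCentroid_mem_span : complFaceCentroid v S ∈ Submodule.span ℝ (v '' S) :=
  Submodule.smul_mem _ _ <| Submodule.sum_mem _ fun _ hi =>
    Submodule.subset_span (mem_image_of_mem v hi)

theorem card_univ_sub_card_ne_zero (hS : S ≠ Finset.univ) : (Fintype.card ι : ℝ) - #S ≠ 0 :=
  sub_ne_zero.2 (by exact_mod_cast ((Finset.card_lt_iff_ne_univ S).2 hS).ne')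

theorem card_div_card_univ_pos (hS₀ : S.Nonempty) : 0 < (#S : ℝ) / Fintype.card ι :=
  div_pos (by exact_mod_cast hS₀.card_pos)
    (by exact_mod_cast hS₀.card_pos.trans_le (Finset.card_le_univ S))

variable [DecidableEq ι]

theorem inner_complFaceCentroid_of_mem
    (hgram : ∀ i j, ⟪v i, v j⟫ = if i = j then (1 - (Fintype.card ι : ℝ)) * a else a)
    (hS : S ≠ Finset.univ) {j : ι} (hj : j ∈ S) :
    ⟪complFaceCentroid v S, v j⟫ = a := by
  have hsum := inner_sum_smul_of_inner_eq_ite hgram S (fun _ => 1) j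
  simp only [one_smul, Finset.sum_const, nsmul_eq_mul, mul_one, if_pos hj] at hsum
  rw [complFaceCentroid, real_inner_smul_left, hsum]
  field_simp [card_univ_sub_card_ne_zero hS]
  ring

theorem inner_complFaceCentroid_self
    (hgram : ∀ i j, ⟪v i, v j⟫ = if i = j then (1 - (Fintype.card ι : ℝ)) * a else a)
    (hS : S ≠ Finset.univ) :
    ⟪complFaceCentroid v S, complFaceCentroid v S⟫
      = -(#S / ((Fintype.card ι : ℝ) - #S)) * a := by
  conv_lhs => arg 3; rw [complFaceCentroid]
  rw [real_inner_smul_right, inner_sum,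
    Finset.sum_congr rfl fun j hj => inner_complFaceCentroid_of_mem hgram hS hj,
    Finset.sum_const, nsmul_eq_mul]
  ring

theorem inner_eq_inner_complFaceCentroid
    (hgram : ∀ i j, ⟪v i, v j⟫ = if i = j then (1 - (Fintype.card ι : ℝ)) * a else a)
    (hS : S ≠ Finset.univ) {j : ι} (hj : j ∉ S) {x : V} (hx : x ∈ Submodule.span ℝ (v '' S)) :
    ⟪v j, x⟫ = ⟪complFaceCentroid v S, x⟫ := by
  refine LinearMap.eqOn_span' (f := innerₛₗ ℝ (v j)) (g := innerₛₗ ℝ (complFaceCentroid v S))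
    ?_ hx
  rintro _ ⟨i, hi, rfl⟩
  have hji : j ≠ i := fun h => hj (h ▸ hi)
  simp only [innerₛₗ_apply_apply]
  rw [hgram, if_neg hji, inner_complFaceCentroid_of_mem hgram hS hi]

theorem forall_le_inner_iff_of_mem_span
    (hgram : ∀ i j, ⟪v i, v j⟫ = if i = j then (1 - (Fintype.card ι : ℝ)) * a else a)
    (hS : S ≠ Finset.univ) {x : V} (hx : x ∈ Submodule.span ℝ (v '' S)) :
    (∀ i, a ≤ ⟪v i, x⟫) ↔ (∀ i ∈ S, a ≤ ⟪v i, x⟫) ∧ a ≤ ⟪complFaceCentroid v S, x⟫ := by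
  obtain ⟨j, hj⟩ : ∃ j, j ∉ S := by simpa [Finset.eq_univ_iff_forall] using hS
  refine ⟨fun h => ⟨fun i _ => h i, ?_⟩, fun h i => ?_⟩
  · rw [← inner_eq_inner_complFaceCentroid hgram hS hj hx]
    exact h j
  · by_cases hi : i ∈ S
    · exact h.1 i hi
    · rw [inner_eq_inner_complFaceCentroid hgram hS hi hx]
      exact h.2

theorem inner_homothety_complFaceCentroid_sub_of_mem
    (hgram : ∀ i j, ⟪v i, v j⟫ = if i = j then (1 - (Fintype.card ι : ℝ)) * a else a)
    (hS : S ≠ Finset.univ) (r : ℝ) (y : V) {i : ι} (hi : i ∈ S) :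
    ⟪v i, AffineMap.homothety (complFaceCentroid v S) r y⟫ - a = r * (⟪v i, y⟫ - a) := by
  rw [AffineMap.homothety_apply, vsub_eq_sub, vadd_eq_add, inner_add_right,
    real_inner_smul_right, inner_sub_right, real_inner_comm (complFaceCentroid v S),
    inner_complFaceCentroid_of_mem hgram hS hi]
  ring

theorem inner_complFaceCentroid_homothety
    (hgram : ∀ i j, ⟪v i, v j⟫ = if i = j then (1 - (Fintype.card ι : ℝ)) * a else a)
    (hS : S ≠ Finset.univ) (y : V) :
    ⟪complFaceCentroid v S, AffineMap.homothety (complFaceCentroid v S)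
        ((#S : ℝ) / Fintype.card ι) y⟫
      = (#S : ℝ) / Fintype.card ι * (⟪complFaceCentroid v S, y⟫ - a) := by
  have hm := card_univ_sub_card_ne_zero hS
  have hk : (Fintype.card ι : ℝ) ≠ 0 :=
    Nat.cast_ne_zero.2 (Nat.zero_lt_of_lt ((Finset.card_lt_iff_ne_univ S).2 hS)).ne'
  rw [AffineMap.homothety_apply, vsub_eq_sub, vadd_eq_add, inner_add_right,
    real_inner_smul_right, inner_sub_right, inner_complFaceCentroid_self hgram hS]
  field_simp
  ring

theorem homothety_complFaceCentroid_mem_iff (ha : a < 0)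
    (hgram : ∀ i j, ⟪v i, v j⟫ = if i = j then (1 - (Fintype.card ι : ℝ)) * a else a)
    (hS₀ : S.Nonempty) (hS : S ≠ Finset.univ) (y : V) :
    AffineMap.homothety (complFaceCentroid v S) ((#S : ℝ) / Fintype.card ι) y ∈
        {x | ∀ i, a ≤ ⟪v i, x⟫} ∩ Submodule.span ℝ (v '' S)
          ∩ {x | 0 ≤ ⟪complFaceCentroid v S, x⟫}
      ↔ y ∈ {x | ∀ i, a ≤ ⟪v i, x⟫} ∩ Submodule.span ℝ (v '' S) := by
  set f := complFaceCentroid v S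
  set r : ℝ := #S / Fintype.card ι
  have hr : 0 < r := card_div_card_univ_pos hS₀
  have hmem : AffineMap.homothety f r y ∈ Submodule.span ℝ (v '' S)
      ↔ y ∈ Submodule.span ℝ (v '' S) := by
    rw [AffineMap.homothety_apply, vsub_eq_sub, vadd_eq_add,
      Submodule.add_mem_iff_left _ complFaceCentroid_mem_span,
      Submodule.smul_mem_iff _ hr.ne', Submodule.sub_mem_iff_left _ complFaceCentroid_mem_span]
  have hv := fun i (hi : i ∈ S) => inner_homothety_complFaceCentroid_sub_of_mem hgram hS r y hi
  have hf := inner_complFaceCentroid_homothety hgram hS y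
  simp only [mem_inter_iff, mem_ofPred_eq, SetLike.mem_coe, hmem]
  constructor
  · rintro ⟨⟨hle, hyE⟩, hpos⟩
    rw [hf] at hpos
    refine ⟨(forall_le_inner_iff_of_mem_span hgram hS hyE).2 ⟨fun i hi => ?_, ?_⟩, hyE⟩
    · have hi' : 0 ≤ r * (⟪v i, y⟫ - a) := by linarith [hle i, hv i hi]
      linarith [(mul_nonneg_iff_of_pos_left hr).1 hi']
    · linarith [(mul_nonneg_iff_of_pos_left hr).1 hpos]
  · rintro ⟨hle, hyE⟩
    obtain ⟨hleS, hlef⟩ := (forall_le_inner_iff_of_mem_span hgram hS hyE).1 hle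
    have hpos : 0 ≤ ⟪f, AffineMap.homothety f r y⟫ := by
      rw [hf]
      exact mul_nonneg hr.le (by linarith)
    refine ⟨⟨(forall_le_inner_iff_of_mem_span hgram hS (hmem.2 hyE)).2
      ⟨fun i hi => ?_, by linarith⟩, hyE⟩, hpos⟩
    linarith [hv i hi, mul_nonneg hr.le (sub_nonneg.2 (hleS i hi))]

theorem image_homothety_complFaceCentroid (ha : a < 0)
    (hgram : ∀ i j, ⟪v i, v j⟫ = if i = j then (1 - (Fintype.card ι : ℝ)) * a else a)
    (hS₀ : S.Nonempty) (hS : S ≠ Finset.univ) :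
    AffineMap.homothety (complFaceCentroid v S) ((#S : ℝ) / Fintype.card ι) ''
        ({x | ∀ i, a ≤ ⟪v i, x⟫} ∩ Submodule.span ℝ (v '' S))
      = {x | ∀ i, a ≤ ⟪v i, x⟫} ∩ Submodule.span ℝ (v '' S)
          ∩ {x | 0 ≤ ⟪complFaceCentroid v S, x⟫} := by
  set h := AffineMap.homothety (complFaceCentroid v S) ((#S : ℝ) / Fintype.card ι)
  have hkey := homothety_complFaceCentroid_mem_iff ha hgram hS₀ hS
  ext x
  refine ⟨fun ⟨y, hy, hyx⟩ => hyx ▸ (hkey y).2 hy, fun hx => ?_⟩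
  have hinv : h (AffineMap.homothety (complFaceCentroid v S) ((#S : ℝ) / Fintype.card ι)⁻¹ x)
      = x := by
    rw [← AffineMap.homothety_mul_apply, mul_inv_cancel₀ (card_div_card_univ_pos hS₀).ne',
      AffineMap.homothety_one,
      AffineMap.id_apply]
  rw [← hinv] at hx
  exact ⟨_, (hkey _).1 hx, hinv⟩

end ComplFace

section SubspaceHausdorff

variable {W : Type*} [NormedAddCommGroup W] [NormedSpace ℝ W] [MeasurableSpace W] [BorelSpace W]
  (E : Submodule ℝ W)

theorem Submodule.hausdorffMeasure_preimage_subtype {s : Set W} (hs : s ⊆ E) {d : ℝ}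
    (hd : 0 ≤ d) : μH[d] ((↑) ⁻¹' s : Set E) = μH[d] s := by
  rw [← isometry_subtype_coe.hausdorffMeasure_image (Or.inl hd)]
  congr 1
  exact image_preimage_eq_of_subset fun x hx => ⟨⟨x, hs hx⟩, rfl⟩

variable [FiniteDimensional ℝ E]

theorem Submodule.hausdorffMeasure_finrank_ne_top {K : Set W} (hK : IsCompact K) (hKE : K ⊆ E) :
    μH[finrank ℝ E] K ≠ ⊤ := by
  rw [← E.hausdorffMeasure_preimage_subtype hKE (Nat.cast_nonneg _)]
  have hK' : IsCompact ((↑) ⁻¹' K : Set E) :=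
    E.closed_of_finiteDimensional.isClosedEmbedding_subtypeVal.isCompact_preimage hK
  exact hK'.measure_ne_top

theorem Submodule.hausdorffMeasure_finrank_inter_pos {U : Set W} (hU : IsOpen U)
    (hne : (U ∩ E).Nonempty) : 0 < μH[finrank ℝ E] (U ∩ E) := by
  rw [← E.hausdorffMeasure_preimage_subtype inter_subset_right (Nat.cast_nonneg _)]
  obtain ⟨x, hxU, hxE⟩ := hne
  refine lt_of_lt_of_le ?_ (measure_mono fun y hy => ⟨hy, y.2⟩)
  exact (hU.preimage continuous_subtype_val).measure_pos (μH[finrank ℝ E] : Measure E)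
    ⟨⟨x, hxE⟩, hxU⟩

theorem Submodule.hausdorffMeasure_finrank_inter_eq_zero {F : Submodule ℝ W} (hEF : ¬E ≤ F) :
    μH[finrank ℝ E] ((E : Set W) ∩ F) = 0 := by
  rw [← E.hausdorffMeasure_preimage_subtype inter_subset_left (Nat.cast_nonneg _)]
  have hF : F.comap E.subtype ≠ ⊤ := fun h => hEF fun x hx => by
    simpa using (Submodule.eq_top_iff'.1 h) ⟨x, hx⟩
  convert Measure.addHaar_submodule (μH[finrank ℝ E] : Measure E) _ hF using 2
  ext x
  simp

end SubspaceHausdorff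

theorem measure_inter_nonpos_add_measure_inter_nonneg {α : Type*} [MeasurableSpace α]
    (μ : Measure α) {s : Set α} {g : α → ℝ} (hs : MeasurableSet s) (hg : Measurable g)
    (hnull : μ (s ∩ {x | g x = 0}) = 0) :
    μ (s ∩ {x | g x ≤ 0}) + μ (s ∩ {x | 0 ≤ g x}) = μ s := by
  have ht : MeasurableSet (s ∩ {x | 0 ≤ g x}) := hs.inter (measurableSet_le measurable_const hg)
  have h := measure_union_add_inter (μ := μ) (s ∩ {x | g x ≤ 0}) ht
  have hunion : s ∩ {x | g x ≤ 0} ∪ s ∩ {x | 0 ≤ g x} = s := by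
    rw [← inter_union_distrib_left, inter_eq_left]
    exact fun x _ => le_total (g x) 0
  have hinter : s ∩ {x | g x ≤ 0} ∩ (s ∩ {x | 0 ≤ g x}) = s ∩ {x | g x = 0} := by
    ext x
    simp only [mem_inter_iff, mem_ofPred_eq]
    constructor
    · rintro ⟨⟨hx, h₁⟩, -, h₂⟩
      exact ⟨hx, le_antisymm h₁ h₂⟩
    · rintro ⟨hx, h⟩
      exact ⟨⟨hx, h.le⟩, hx, h.ge⟩
  rw [hunion, hinter, hnull, add_zero] at h
  exact h.symm

theorem ENNReal.toReal_div_of_add_smul_eq {A N : ℝ≥0∞} {c : ℝ≥0} (hA₀ : A ≠ 0) (hA : A ≠ ⊤)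
    (hc : c ≠ 0) (hsum : N + c • A = A) :
    (c • A).toReal / A.toReal = c ∧ N.toReal / (c • A).toReal = (c : ℝ)⁻¹ - 1 := by
  have hApos : 0 < A.toReal := ENNReal.toReal_pos hA₀ hA
  have hcA : (c • A).toReal = c * A.toReal := by
    rw [ENNReal.smul_def, smul_eq_mul, ENNReal.toReal_mul, ENNReal.coe_toReal]
  have hN : N.toReal = A.toReal - c * A.toReal := by
    have hNtop : N ≠ ⊤ := ne_top_of_le_ne_top hA (le_self_add.trans_eq hsum)
    have hcAtop : c • A ≠ ⊤ := ne_top_of_le_ne_top hA (le_add_self.trans_eq hsum)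
    have h := ENNReal.toReal_add hNtop hcAtop
    rw [hsum, hcA] at h
    linarith
  have hc' : (0 : ℝ) < c := by positivity
  rw [hcA, hN]
  exact ⟨by field_simp, by field_simp⟩

section SimplexSection

variable [MeasurableSpace V] [BorelSpace V]

theorem Submodule.hausdorffMeasure_finrank_setOf_le_inner_inter_pos [Finite ι]
    (E : Submodule ℝ V) [FiniteDimensional ℝ E] (w : ι → V) (ha : a < 0) :
    0 < μH[finrank ℝ E] ({x | ∀ i, a ≤ ⟪w i, x⟫} ∩ E) := by
  set U := {x : V | ∀ i, a < ⟪w i, x⟫}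
  have hU : IsOpen U := by
    simp only [U, ofPred_forall]
    exact isOpen_iInter_of_finite fun i => isOpen_lt continuous_const
      (continuous_const.inner continuous_id)
  have h0 : (0 : V) ∈ U ∩ E := ⟨fun i => by simpa using ha, E.zero_mem⟩
  refine lt_of_lt_of_le (E.hausdorffMeasure_finrank_inter_pos hU ⟨0, h0⟩) (measure_mono ?_)
  exact Set.inter_subset_inter_left _ fun x (hx : x ∈ U) i => (hx i).le

variable [FiniteDimensional ℝ V] [Fintype ι] [DecidableEq ι]

theorem hausdorffMeasure_inter_nonpos_add_smul_eq (haff : AffineIndependent ℝ v)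
    (hcent : ∑ i, v i = 0) (ha : a < 0)
    (hgram : ∀ i j, ⟪v i, v j⟫ = if i = j then (1 - (Fintype.card ι : ℝ)) * a else a)
    {S : Finset ι} (hS₀ : S.Nonempty) (hS : S ≠ Finset.univ) :
    μH[#S] ({x | ∀ i, a ≤ ⟪v i, x⟫} ∩ Submodule.span ℝ (v '' S)
          ∩ {x | ⟪complFaceCentroid v S, x⟫ ≤ 0})
        + ‖(#S : ℝ) / Fintype.card ι‖₊ ^ (#S : ℝ)
          • μH[#S] ({x | ∀ i, a ≤ ⟪v i, x⟫} ∩ Submodule.span ℝ (v '' S))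
      = μH[#S] ({x | ∀ i, a ≤ ⟪v i, x⟫} ∩ Submodule.span ℝ (v '' S)) := by
  set E := Submodule.span ℝ (v '' S)
  set f := complFaceCentroid v S
  set K := {x | ∀ i, a ≤ ⟪v i, x⟫} ∩ (E : Set V)
  have ⟨i, hi⟩ := hS₀
  have hdim : finrank ℝ E = #S := haff.finrank_span_image_of_sum_eq_zero hcent hS
  have hnull : μH[#S] (K ∩ {x | ⟪f, x⟫ = 0}) = 0 := by
    have hE : ¬E ≤ LinearMap.ker (innerₛₗ ℝ f) := fun h => by
      have := h (Submodule.subset_span (mem_image_of_mem v hi))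
      rw [LinearMap.mem_ker, innerₛₗ_apply_apply,
        inner_complFaceCentroid_of_mem hgram hS hi] at this
      exact ha.ne this
    have hsub : K ∩ {x | ⟪f, x⟫ = 0} ⊆ (E : Set V) ∩ LinearMap.ker (innerₛₗ ℝ f) :=
      fun x hx => ⟨hx.1.2, hx.2⟩
    rw [← hdim]
    exact measure_mono_null hsub (E.hausdorffMeasure_finrank_inter_eq_zero hE)
  have hK : MeasurableSet K := by
    refine MeasurableSet.inter ?_ E.closed_of_finiteDimensional.measurableSet
    simp only [ofPred_forall]
    exact MeasurableSet.iInter fun i => measurableSet_le measurable_const (by fun_prop)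
  rw [← hausdorffMeasure_homothety_image (Nat.cast_nonneg _) f (card_div_card_univ_pos hS₀).ne',
    image_homothety_complFaceCentroid ha hgram hS₀ hS]
  exact measure_inter_nonpos_add_measure_inter_nonneg (g := fun x => ⟪f, x⟫) μH[#S] hK
    (by fun_prop) hnull

theorem hausdorffMeasure_convexHull_inter_span_ratio (haff : AffineIndependent ℝ v)
    (htot : affineSpan ℝ (range v) = ⊤) (hcent : ∑ i, v i = 0)
    (hreg : ∃ d : ℝ, ∀ i j, i ≠ j → dist (v i) (v j) = d) {S : Finset ι} (hS₀ : S.Nonempty)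
    (hS : S ≠ Finset.univ) :
    (μH[#S] (convexHull ℝ (range v) ∩ Submodule.span ℝ (v '' S)
          ∩ {x | 0 ≤ ⟪complFaceCentroid v S, x⟫})).toReal /
        (μH[#S] (convexHull ℝ (range v) ∩ Submodule.span ℝ (v '' S))).toReal
        = ((#S : ℝ) / Fintype.card ι) ^ #S ∧
      (μH[#S] (convexHull ℝ (range v) ∩ Submodule.span ℝ (v '' S)
          ∩ {x | ⟪complFaceCentroid v S, x⟫ ≤ 0})).toReal /
        (μH[#S] (convexHull ℝ (range v) ∩ Submodule.span ℝ (v '' S)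
          ∩ {x | 0 ≤ ⟪complFaceCentroid v S, x⟫})).toReal
        = ((Fintype.card ι : ℝ) / #S) ^ #S - 1 := by
  have ⟨i, hi⟩ := hS₀
  obtain ⟨j, hj⟩ : ∃ j, j ∉ S := by simpa [Finset.eq_univ_iff_forall] using hS
  have : Nontrivial ι := ⟨⟨i, j, fun h => hj (h ▸ hi)⟩⟩
  obtain ⟨a, ha, hgram⟩ := exists_inner_eq_ite_of_dist_eq haff.injective hcent hreg
  set E := Submodule.span ℝ (v '' S)
  set r : ℝ := #S / Fintype.card ι
  have hdim : finrank ℝ E = #S := haff.finrank_span_image_of_sum_eq_zero hcent hS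
  have hKc : IsCompact (convexHull ℝ (range v) ∩ E) :=
    (finite_range v).isCompact_convexHull (𝕜 := ℝ) |>.inter_right E.closed_of_finiteDimensional
  rw [convexHull_eq_setOf_le_inner haff htot ha hgram] at hKc ⊢
  have hfin := hdim ▸ E.hausdorffMeasure_finrank_ne_top hKc inter_subset_right
  have hpos := hdim ▸ (E.hausdorffMeasure_finrank_setOf_le_inner_inter_pos v ha).ne'
  have hr : 0 < r := card_div_card_univ_pos hS₀
  rw [← image_homothety_complFaceCentroid ha hgram hS₀ hS,
    hausdorffMeasure_homothety_image (Nat.cast_nonneg _) _ hr.ne']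
  obtain ⟨h₁, h₂⟩ := ENNReal.toReal_div_of_add_smul_eq hpos hfin
    (NNReal.rpow_pos (nnnorm_pos.2 hr.ne')).ne'
    (hausdorffMeasure_inter_nonpos_add_smul_eq haff hcent ha hgram hS₀ hS)
  have hcoe : ((‖r‖₊ ^ (#S : ℝ) : ℝ≥0) : ℝ) = r ^ #S := by
    rw [NNReal.coe_rpow, coe_nnnorm, Real.norm_of_nonneg hr.le, Real.rpow_natCast]
  rw [hcoe] at h₁ h₂
  exact ⟨h₁, by rw [h₂, div_pow, inv_div, div_pow]⟩

end SimplexSection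

theorem simplex_section_ratio_general (n l : ℕ) (hl1 : 1 ≤ l) (hl2 : l ≤ n - 1)
    (v : Fin (n + 1) → EuclideanSpace ℝ (Fin n))
    (haff : AffineIndependent ℝ v) (hcent : ∑ i, v i = 0)
    (hreg : ∃ d : ℝ, ∀ i j, i ≠ j → dist (v i) (v j) = d) :
    letI Δ : Set (EuclideanSpace ℝ (Fin n)) := convexHull ℝ (Set.range v)
    letI E : Set (EuclideanSpace ℝ (Fin n)) :=
      (Submodule.span ℝ (v '' {i | (i : ℕ) < l}) : Set (EuclideanSpace ℝ (Fin n)))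
    letI f : EuclideanSpace ℝ (Fin n) :=
      (-(((n : ℝ) + 1 - l)⁻¹)) • ∑ i ∈ Finset.univ.filter (fun i : Fin (n + 1) => (i : ℕ) < l), v i
    ((μH[(l : ℝ)] (Δ ∩ E ∩ {x | 0 ≤ ⟪f, x⟫})).toReal / (μH[(l : ℝ)] (Δ ∩ E)).toReal
        = ((l : ℝ) / (n + 1)) ^ l) ∧
      ((μH[(l : ℝ)] (Δ ∩ E ∩ {x | ⟪f, x⟫ ≤ 0})).toReal /
          (μH[(l : ℝ)] (Δ ∩ E ∩ {x | 0 ≤ ⟪f, x⟫})).toReal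
        = (((n : ℝ) + 1) / l) ^ l - 1) := by
  set S := Finset.univ.filter fun i : Fin (n + 1) => (i : ℕ) < l
  have hSl : #S = l := by
    simp only [S, Fin.card_filter_val_lt]
    omega
  have hScoe : (S : Set (Fin (n + 1))) = {i : Fin (n + 1) | (i : ℕ) < l} := by
    ext
    simp [S]
  have hS₀ : S.Nonempty := Finset.card_pos.1 (by omega)
  have hS : S ≠ Finset.univ := fun h => by
    have := congrArg Finset.card h
    simp only [hSl, Finset.card_univ, Fintype.card_fin] at this
    omega
  have htot : affineSpan ℝ (range v) = ⊤ :=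
    haff.affineSpan_eq_top_iff_card_eq_finrank_add_one.2 (by simp)
  have hf : complFaceCentroid v S
      = (-(((n : ℝ) + 1 - l)⁻¹)) • ∑ i ∈ S, v i := by
    simp [complFaceCentroid, hSl]
  have h := hausdorffMeasure_convexHull_inter_span_ratio haff htot hcent hreg hS₀ hS
  rw [hf, hSl, hScoe] at h
  simpa using h

/-- For a regular simplex `Δₙ = conv(v₁,…,v_{n+1})` in `ℝⁿ` with centroid `0`,
`E_l = span(v₁,…,v_l)` and `f_{l+1} = -(∑_{i≤l} v_i)/(n+1-l)`, the `l`-dimensional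
volume ratios satisfy `|Δₙ ∩ E_l ∩ f_{l+1}⁺|/|Δₙ ∩ E_l| = (l/(n+1))^l` and
`|Δₙ ∩ E_l ∩ f_{l+1}⁻|/|Δₙ ∩ E_l ∩ f_{l+1}⁺| = ((n+1)/l)^l - 1`. -/
theorem simplex_section_ratio (n l : ℕ) (hn : 2 ≤ n) (hl1 : 1 ≤ l) (hl2 : l ≤ n - 1)
    (v : Fin (n + 1) → EuclideanSpace ℝ (Fin n))
    (haff : AffineIndependent ℝ v) (hcent : ∑ i, v i = 0)
    (hreg : ∃ d : ℝ, ∀ i j, i ≠ j → dist (v i) (v j) = d) :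
    letI Δ : Set (EuclideanSpace ℝ (Fin n)) := convexHull ℝ (Set.range v)
    letI E : Set (EuclideanSpace ℝ (Fin n)) :=
      (Submodule.span ℝ (v '' {i | (i : ℕ) < l}) : Set (EuclideanSpace ℝ (Fin n)))
    letI f : EuclideanSpace ℝ (Fin n) :=
      (-(((n : ℝ) + 1 - l)⁻¹)) • ∑ i ∈ Finset.univ.filter (fun i : Fin (n + 1) => (i : ℕ) < l), v i
    ((μH[(l : ℝ)] (Δ ∩ E ∩ {x | 0 ≤ ⟪f, x⟫})).toReal / (μH[(l : ℝ)] (Δ ∩ E)).toReal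
        = ((l : ℝ) / (n + 1)) ^ l) ∧
      ((μH[(l : ℝ)] (Δ ∩ E ∩ {x | ⟪f, x⟫ ≤ 0})).toReal /
          (μH[(l : ℝ)] (Δ ∩ E ∩ {x | 0 ≤ ⟪f, x⟫})).toReal
        = (((n : ℝ) + 1) / l) ^ l - 1) :=
  simplex_section_ratio_general n l hl1 hl2 v haff hcent hreg
end

section
/- Let n = 2^m and K = [−1,1]ⁿ. There exist n pairwise orthogonal vertices f₁,…,f_n of a common facet of K such that, with C the closed convex cone generated by f₁,…,f_n, one has |K ∩ C| = n^{n/2}/n!. -/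
/-!
The rows of the Sylvester–Hadamard matrix `H` of order `n = 2^m` are pairwise orthogonal sign
vectors sharing a coordinate `j₀` on which they all equal `1`. For `λ ≥ 0` the point `∑ λᵢ fᵢ`
has `j₀`-coordinate `∑ λᵢ` and all other coordinates bounded by `∑ λᵢ` in absolute value, so
`K ∩ C` is the image of the simplex `{λ ≥ 0, ∑ λᵢ ≤ 1}` under `λ ↦ λ H`. Its volume is
`|det H| / n! = n^{n/2} / n!`, because `H Hᵀ = n I`. The simplex volume `1/n!` comes from the
`ℓ¹` ball, of volume `2ⁿ/n!`, which `x ↦ (|xᵢ|)ᵢ` folds `2ⁿ`-to-one onto the simplex.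
-/

open MeasureTheory Set Matrix
open scoped NNReal Nat Kronecker RealInnerProductSpace

lemma Real.map_abs_volume : (volume : Measure ℝ).map abs = (2 : ℝ≥0) • volume.restrict (Ici 0) := by
  ext s hs
  rw [Measure.map_apply measurable_abs hs, Measure.smul_apply, Measure.restrict_apply hs,
    ENNReal.smul_def, smul_eq_mul, ENNReal.coe_ofNat, two_mul]
  have hpre : abs ⁻¹' s = (s ∩ Ici 0) ∪ -(s ∩ Ici 0) := by
    ext x
    grind [abs_of_nonneg, abs_of_nonpos, mem_neg]
  have hinter : volume ((s ∩ Ici 0) ∩ -(s ∩ Ici 0)) = 0 := by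
    refine measure_mono_null (fun x hx => ?_) (Real.volume_singleton (a := 0))
    simp only [mem_inter_iff, mem_Ici, mem_neg] at hx
    exact le_antisymm (by linarith [hx.2.2]) hx.1.2
  rw [hpre, ← add_zero (volume (_ ∪ _)), ← hinter,
    measure_union_add_inter _ ((hs.inter measurableSet_Ici).neg), Measure.measure_neg]

lemma volume_preimage_abs_pi {ι : Type*} [Fintype ι] {A : Set (ι → ℝ)} (hA : MeasurableSet A) :
    volume ((fun (x : ι → ℝ) i => |x i|) ⁻¹' A)
      = 2 ^ Fintype.card ι * volume (A ∩ univ.pi fun _ => Ici 0) := by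
  have : SigmaFinite ((volume : Measure ℝ).map abs) := by
    rw [Real.map_abs_volume]; infer_instance
  have hmap : (volume : Measure (ι → ℝ)).map (fun (x : ι → ℝ) i => |x i|)
      = (2 ^ Fintype.card ι : ℝ≥0) • volume.restrict (univ.pi fun _ => Ici 0) := by
    rw [volume_pi, Measure.pi_map_pi fun _ => measurable_abs.aemeasurable, Measure.restrict_pi_pi]
    simp_rw [Real.map_abs_volume]
    refine Measure.pi_eq fun s _ => ?_
    simp [Measure.pi_pi, Finset.prod_mul_distrib, ENNReal.smul_def]
  rw [← Measure.map_apply (by fun_prop) hA, hmap, Measure.smul_apply, Measure.restrict_apply hA,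
    ENNReal.smul_def]
  simp

lemma MeasureTheory.Measure.addHaar_linearMap_preimage_singleton
    {E : Type*} [NormedAddCommGroup E] [NormedSpace ℝ E] [MeasurableSpace E] [BorelSpace E]
    [FiniteDimensional ℝ E] (μ : Measure E) [μ.IsAddHaarMeasure] {L : E →ₗ[ℝ] ℝ} (hL : L ≠ 0)
    (c : ℝ) : μ (L ⁻¹' {c}) = 0 := by
  obtain ⟨p, rfl⟩ := LinearMap.surjective hL c
  have : L ⁻¹' {L p} = (· + -p) ⁻¹' (LinearMap.ker L : Set E) := by
    ext x; simp [← sub_eq_add_neg, sub_eq_zero]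
  rw [this, measure_preimage_add_right,
    Measure.addHaar_submodule μ _ (LinearMap.ker_eq_top.not.2 hL)]

def coneInCube {ι κ : Type*} [Fintype ι] (v : ι → κ → ℝ) : Set (κ → ℝ) :=
  {x | ∀ j, |x j| ≤ 1} ∩ {x | ∃ lam : ι → ℝ, (∀ i, 0 ≤ lam i) ∧ x = ∑ i, lam i • v i}

def cornerSimplex (ι : Type*) [Fintype ι] : Set (ι → ℝ) := {y | (∀ i, 0 ≤ y i) ∧ ∑ i, y i ≤ 1}

lemma volume_cornerSimplex (ι : Type*) [Fintype ι] [Nonempty ι] :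
    volume (cornerSimplex ι) = ENNReal.ofReal (1 / (Fintype.card ι)!) := by
  have hcross : volume {x : ι → ℝ | ∑ i, |x i| < 1}
      = ENNReal.ofReal (2 ^ Fintype.card ι / (Fintype.card ι)!) := by
    simpa [one_add_one_eq_two, Real.Gamma_nat_eq_factorial] using volume_sum_rpow_lt_one ι le_rfl
  have hopen : volume ({y : ι → ℝ | ∑ i, y i < 1} ∩ univ.pi fun _ => Ici 0)
      = ENNReal.ofReal (1 / (Fintype.card ι)!) := by
    have h := volume_preimage_abs_pi (measurableSet_lt (by fun_prop) measurable_const :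
      MeasurableSet {y : ι → ℝ | ∑ i, y i < 1})
    rw [show (fun (x : ι → ℝ) i => |x i|) ⁻¹' {y | ∑ i, y i < 1} = {x | ∑ i, |x i| < 1} from rfl,
      hcross, ← mul_one_div (2 ^ _ : ℝ), ENNReal.ofReal_mul (by positivity),
      ENNReal.ofReal_pow zero_le_two, ENNReal.ofReal_ofNat] at h
    exact ((ENNReal.mul_right_inj (by simp) (by simp)).1 h).symm
  have hface : volume {y : ι → ℝ | ∑ i, y i = 1} = 0 := by
    let L : (ι → ℝ) →ₗ[ℝ] ℝ := ∑ i, LinearMap.proj i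
    have hL : L ≠ 0 := fun h => by simpa [L] using LinearMap.congr_fun h (fun _ => 1)
    convert Measure.addHaar_linearMap_preimage_singleton volume hL 1
    ext y
    simp [L]
  apply le_antisymm
  · calc volume (cornerSimplex ι)
        ≤ volume (({y : ι → ℝ | ∑ i, y i < 1} ∩ univ.pi fun _ => Ici 0) ∪ {y | ∑ i, y i = 1}) :=
          measure_mono fun y ⟨hy0, hy1⟩ => (hy1.lt_or_eq).imp (fun h => ⟨h, fun i _ => hy0 i⟩) id
      _ ≤ _ := measure_union_le _ _
      _ = _ := by rw [hopen, hface, add_zero]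
  · exact hopen ▸ measure_mono fun y ⟨hy1, hy0⟩ => ⟨fun i => hy0 i trivial, hy1.le⟩

lemma coneInCube_eq_image_cornerSimplex {ι κ : Type*} [Fintype ι] {M : Matrix ι κ ℝ}
    (hM : ∀ i j, |M i j| ≤ 1) {j₀ : κ} (hj₀ : ∀ i, M i j₀ = 1) :
    coneInCube M = M.vecMulLinear '' cornerSimplex ι := by
  ext x
  simp only [coneInCube, mem_inter_iff, mem_ofPred_eq, mem_image, vecMulLinear_apply, vecMul_eq_sum]
  constructor
  · rintro ⟨hx, lam, hlam, rfl⟩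
    refine ⟨lam, ⟨hlam, ?_⟩, rfl⟩
    calc ∑ i, lam i = (∑ i, lam i • M i) j₀ := by simp [hj₀]
      _ ≤ 1 := (le_abs_self _).trans (hx j₀)
  · rintro ⟨lam, ⟨hlam, hsum⟩, rfl⟩
    refine ⟨fun j => ?_, lam, hlam, rfl⟩
    calc |(∑ i, lam i • M i) j| ≤ ∑ i, |lam i * M i j| := by
          simpa using Finset.abs_sum_le_sum_abs (fun i => lam i * M i j) Finset.univ
      _ ≤ ∑ i, lam i := Finset.sum_le_sum fun i _ => by
          rw [abs_mul, abs_of_nonneg (hlam i)]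
          exact mul_le_of_le_one_right (hlam i) (hM i j)
      _ ≤ 1 := hsum

lemma volume_vecMulLinear_image_cornerSimplex {ι : Type*} [Fintype ι] [DecidableEq ι]
    [Nonempty ι] (M : Matrix ι ι ℝ) :
    volume (M.vecMulLinear '' cornerSimplex ι)
      = ENNReal.ofReal (|M.det| / (Fintype.card ι)!) := by
  rw [Measure.addHaar_image_linearMap, ← mulVecLin_transpose, ← toLin'_apply',
    LinearMap.det_toLin', det_transpose, volume_cornerSimplex,
    ← ENNReal.ofReal_mul (abs_nonneg _), mul_one_div]

namespace Matrix

variable {n : Type*} [Fintype n] [DecidableEq n] {A : Matrix n n ℝ}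

lemma IsHadamard.abs_det (hA : A.IsHadamard) :
    |A.det| = (Fintype.card n : ℝ) ^ ((Fintype.card n : ℝ) / 2) := by
  have hsq : A.det ^ 2 = (Fintype.card n : ℝ) ^ Fintype.card n := by
    simpa [sq] using hA.det_mul_star_det
  rw [← Real.sqrt_sq_eq_abs, hsq, Real.sqrt_eq_rpow, ← Real.rpow_natCast,
    ← Real.rpow_mul (Nat.cast_nonneg _)]
  ring_nf

lemma IsHadamard.dotProduct_row_eq_zero (hA : A.IsHadamard) {i i' : n} (h : i ≠ i') :
    A i ⬝ᵥ A i' = 0 := by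
  simpa [mul_apply, dotProduct, h] using congr_fun₂ hA.mul_conjTranspose i i'

end Matrix

def finTwoProdPowEquiv (m : ℕ) : Fin 2 × Fin (2 ^ m) ≃ Fin (2 ^ (m + 1)) :=
  finProdFinEquiv.trans (finCongr (pow_succ' 2 m).symm)

noncomputable def sylvester : (m : ℕ) → Matrix (Fin (2 ^ m)) (Fin (2 ^ m)) ℝ
  | 0 => 1
  | m + 1 => reindex (finTwoProdPowEquiv m) (finTwoProdPowEquiv m) (!![1, 1; 1, -1] ⊗ₖ sylvester m)

lemma isHadamard_two : (!![1, 1; 1, -1] : Matrix (Fin 2) (Fin 2) ℝ).IsHadamard := by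
  refine .of_mul_conjTranspose (fun i j => Unitary.mem_iff_eq_one_or_eq_neg_one.2 ?_) ?_
    (isRegular_iff_ne_zero.2 (by norm_num))
  · fin_cases i <;> fin_cases j <;> simp
  · ext i j; fin_cases i <;> fin_cases j <;> norm_num [mul_apply, Fin.sum_univ_two]

lemma isHadamard_sylvester (m : ℕ) : (sylvester m).IsHadamard := by
  induction m with
  | zero =>
    refine .of_mul_conjTranspose (fun i j => ?_) (by simp [sylvester])
      (by simpa using isRegular_one)
    obtain rfl := Subsingleton.elim (α := Fin 1) i j
    simp [sylvester]
  | succ m ih => exact (isHadamard_two.kronecker ih).reindex _ _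

lemma sylvester_apply_zero_right (m : ℕ) (i : Fin (2 ^ m)) : sylvester m i 0 = 1 := by
  induction m with
  | zero =>
    obtain rfl := Subsingleton.elim (α := Fin 1) i 0
    exact one_apply_eq _
  | succ m ih =>
    obtain ⟨⟨a, b⟩, rfl⟩ := (finTwoProdPowEquiv m).surjective i
    have h0 : (0 : Fin (2 ^ (m + 1))) = finTwoProdPowEquiv m (0, 0) := by
      ext; simp [finTwoProdPowEquiv]
    rw [h0]
    fin_cases a <;> simp [sylvester, ih]

theorem cube_cone_volume_general (m n : ℕ) (hn : n = 2 ^ m) :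
    letI K : Set (EuclideanSpace ℝ (Fin n)) := {x | ∀ i, |x i| ≤ 1}
    ∃ f : Fin n → EuclideanSpace ℝ (Fin n),
      (∀ i j, f i j = 1 ∨ f i j = -1) ∧
      (∃ j₀ : Fin n, ∀ i, f i j₀ = 1) ∧
      (∀ i i', i ≠ i' → ⟪f i, f i'⟫ = 0) ∧
      (volume (K ∩ {x | ∃ lam : Fin n → ℝ, (∀ i, 0 ≤ lam i) ∧ x = ∑ i, lam i • f i})).toReal
        = (n : ℝ) ^ ((n : ℝ) / 2) / (Nat.factorial n) := by
  subst hn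
  have hH := isHadamard_sylvester m
  have hpm (i j) : sylvester m i j = 1 ∨ sylvester m i j = -1 :=
    Unitary.mem_iff_eq_one_or_eq_neg_one.1 (hH.apply_mem i j)
  refine ⟨fun i => WithLp.toLp 2 (sylvester m i), hpm, ⟨0, sylvester_apply_zero_right m⟩,
    fun i i' h => ?_, ?_⟩
  · simpa [EuclideanSpace.inner_toLp_toLp] using hH.dotProduct_row_eq_zero h.symm
  · rw [show _ ∩ _ = (MeasurableEquiv.toLp 2 _).symm ⁻¹' coneInCube (sylvester m) by
        ext x; simp [coneInCube, WithLp.ext_iff],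
      (EuclideanSpace.volume_preserving_symm_measurableEquiv_toLp _).measure_preimage_equiv,
      coneInCube_eq_image_cornerSimplex (fun i j => by rcases hpm i j with h | h <;> simp [h])
        (sylvester_apply_zero_right m), volume_vecMulLinear_image_cornerSimplex, hH.abs_det,
      Fintype.card_fin, ENNReal.toReal_ofReal (by positivity)]

/-- For the cube `K = [-1,1]ⁿ` with `n = 2^m`, there exist `n` pairwise orthogonal
vertices `f₁,…,f_n` lying in a common facet of `K` such that, with `C` the closed
convex cone they generate, `|K ∩ C| = n^{n/2}/n!`. -/
theorem cube_cone_volume (m n : ℕ) (hn : n = 2 ^ m) (hn1 : 1 ≤ n) :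
    letI K : Set (EuclideanSpace ℝ (Fin n)) := {x | ∀ i, |x i| ≤ 1}
    ∃ f : Fin n → EuclideanSpace ℝ (Fin n),
      (∀ i j, f i j = 1 ∨ f i j = -1) ∧
      (∃ j₀ : Fin n, ∀ i, f i j₀ = 1) ∧
      (∀ i i', i ≠ i' → ⟪f i, f i'⟫ = 0) ∧
      (volume (K ∩ {x | ∃ lam : Fin n → ℝ, (∀ i, 0 ≤ lam i) ∧ x = ∑ i, lam i • f i})).toReal
        = (n : ℝ) ^ ((n : ℝ) / 2) / (Nat.factorial n) :=
  cube_cone_volume_general m n hn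
end
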